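/- arXiv:2008.09432 — 8 statements merged into one kernel-verified Lean document; each statement's English description precedes it below -/
import Mathlib

section
/- Let X be an n×n integer matrix, Φ an m×m rational matrix, and A : ℤ^m → SL_n(ℤ) a group homomorphism such that for every v ∈ ℤ^m the matrix A(v) is net. Suppose that 1 is not an eigenvalue of Φ, and that there exists a positive integer k such that Φ·(k v) ∈ ℤ^m for all v ∈ ℤ^m and X·A(k v) = A(Φ·(k v))·X for all v ∈ ℤ^m. Then det(I − A(v)·X) = det(I − X) for all v ∈ ℤ^m. -/
/-- A complex square matrix is *net* if the multiplicative subgroup of `ℂˣ` generated by its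
complex eigenvalues contains no root of unity other than `1`. -/
def Matrix.IsNet {n : ℕ} (M : Matrix (Fin n) (Fin n) ℂ) : Prop :=
  ∀ u ∈ Subgroup.closure {u : ℂˣ | (u : ℂ) ∈ spectrum ℂ M},
    ∀ r : ℕ, 0 < r → u ^ r = 1 → u = 1

/-!
Put `f x = det (1 - A x * X)`. Conjugating `1 - A x * X` by `A (k • v)` shows that `f` is periodic
with period `Φ (k v) - k v`; as `Φ - 1` is invertible these periods contain `N • ℤ^m` for some
`N > 0`. Fix `u`, put `B = A u` and `F j = det (1 - B ^ j * X)`, so that `F` is constant on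
`1 + Nℕ`. Now `F` is an exponential polynomial `∑ pμ(j) μ ^ j` with bases in the group `G`
generated by the eigenvalues of `B`. Along `1 + Nℕ` its `μ`-part becomes a generalized
`μ ^ N`-eigenvector of the shift, and netness makes `μ ↦ μ ^ N` injective on `G`; independence of
generalized eigenspaces then forces `F` to be constant, so `F 1 = F 0`.
-/

open Polynomial Matrix

lemma fwdDiff_iter_comp_natCast {R G : Type*} [AddCommMonoidWithOne R] [AddCommGroup G]
    (f : R → G) (n : ℕ) : (fwdDiff 1)^[n] (f ∘ Nat.cast) = ((fwdDiff 1)^[n] f) ∘ Nat.cast := by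
  ext j
  simp [fwdDiff_iter_eq_sum_shift, nsmul_one]

lemma fwdDiff_iter_eq_zero_of_le {G : Type*} [AddCommGroup G] {g : ℕ → G} {k i : ℕ}
    (hg : (fwdDiff 1)^[k] g = 0) (hki : k ≤ i) : (fwdDiff 1)^[i] g = 0 := by
  obtain ⟨l, rfl⟩ := Nat.exists_eq_add_of_le hki
  rw [add_comm, Function.iterate_add_apply, hg]
  exact Function.iterate_fixed (fwdDiff_const 1 0) l

lemma exists_eval_eq_of_fwdDiff_iter_eq_zero {K : Type*} [Field K] [CharZero K] {g : ℕ → K}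
    {k : ℕ} (hg : (fwdDiff 1)^[k] g = 0) : ∃ p : K[X], ∀ j : ℕ, g j = p.eval (j : K) := by
  -- Newton: `g j = ∑ i, j.choose i * Δⁱ g 0`, and `j.choose i = (descPochhammer K i).eval j / i!`.
  refine ⟨∑ i ∈ Finset.range k, C ((fwdDiff 1)^[i] g 0 / i.factorial) * descPochhammer K i,
    fun j => ?_⟩
  have hnewton := shift_eq_sum_fwdDiff_iter 1 g j 0
  simp only [zero_add, smul_eq_mul, mul_one, nsmul_eq_mul] at hnewton
  rw [hnewton, eval_finsetSum]
  simp only [eval_mul, eval_C, descPochhammer_eval_eq_descFactorial,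
    Nat.descFactorial_eq_factorial_mul_choose]
  calc ∑ i ∈ Finset.range (j + 1), (j.choose i : K) * (fwdDiff 1)^[i] g 0
      = ∑ i ∈ Finset.range (j + 1) ∩ Finset.range k, (j.choose i : K) * (fwdDiff 1)^[i] g 0 := by
        refine (Finset.sum_subset Finset.inter_subset_left fun i hi hik => ?_).symm
        simp only [Finset.mem_inter, Finset.mem_range, not_and, not_lt] at hi hik
        simp [fwdDiff_iter_eq_zero_of_le hg (hik hi)]
    _ = ∑ i ∈ Finset.range k, (j.choose i : K) * (fwdDiff 1)^[i] g 0 := by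
        refine Finset.sum_subset Finset.inter_subset_right fun i hi hij => ?_
        simp only [Finset.mem_inter, Finset.mem_range, not_and, not_lt] at hi hij
        simp [Nat.choose_eq_zero_of_lt (by omega : j < i)]
    _ = _ := by
        refine Finset.sum_congr rfl fun i _ => ?_
        have : (i.factorial : K) ≠ 0 := by exact_mod_cast i.factorial_ne_zero
        push_cast
        field_simp

def seqShift : Module.End ℂ (ℕ → ℂ) := LinearMap.funLeft ℂ ℂ (· + 1)

lemma pow_seqShift_sub_smul_geom (μ : ℂ) (g : ℕ → ℂ) (k : ℕ) :
    ((seqShift - μ • 1) ^ k) (fun j => g j * μ ^ j) =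
      μ ^ k • fun j => (fwdDiff 1)^[k] g j * μ ^ j := by
  induction k with
  | zero => simp
  | succ k ih =>
    rw [pow_succ', Module.End.mul_apply, ih, map_smul, pow_succ, mul_smul,
      Function.iterate_succ_apply']
    congr 1
    ext j
    simp only [LinearMap.sub_apply, LinearMap.smul_apply, Module.End.one_apply, seqShift,
      LinearMap.funLeft_apply, Pi.sub_apply, Pi.smul_apply, smul_eq_mul, fwdDiff, pow_succ]
    ring

lemma pow_seqShift_sub_smul_orbit {V : Type*} [AddCommGroup V] [Module ℂ V]
    (f : Module.End ℂ V) (ψ : V →ₗ[ℂ] ℂ) (μ : ℂ) (k : ℕ) (v : V) :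
    ((seqShift - μ • 1) ^ k) (fun j => ψ ((f ^ j) v)) =
      fun j => ψ ((f ^ j) (((f - μ • 1) ^ k) v)) := by
  induction k generalizing v with
  | zero => simp
  | succ k ih =>
    have h1 : (seqShift - μ • 1) (fun j => ψ ((f ^ j) v)) =
        fun j => ψ ((f ^ j) ((f - μ • 1) v)) := by
      ext j
      simp [seqShift, LinearMap.funLeft_apply, pow_succ]
    rw [pow_succ, Module.End.mul_apply, h1, ih, pow_succ, Module.End.mul_apply]

noncomputable def expPoly (μ : ℂ) : ℂ[X] →ₗ[ℂ] ℕ → ℂ where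
  toFun p j := p.eval (j : ℂ) * μ ^ j
  map_add' p q := by ext j; simp [add_mul]
  map_smul' c p := by ext j; simp [mul_assoc]

lemma expPoly_apply (μ : ℂ) (p : ℂ[X]) (j : ℕ) : expPoly μ p j = p.eval (j : ℂ) * μ ^ j := rfl

lemma expPoly_mul_expPoly (μ ν : ℂ) (p q : ℂ[X]) :
    expPoly μ p * expPoly ν q = expPoly (μ * ν) (p * q) := by
  ext j
  simp only [Pi.mul_apply, expPoly_apply, eval_mul, mul_pow]
  ring

lemma range_expPoly_le_maxGenEigenspace (μ : ℂ) :
    LinearMap.range (expPoly μ) ≤ seqShift.maxGenEigenspace μ := by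
  rintro _ ⟨p, rfl⟩
  refine (Module.End.mem_maxGenEigenspace _ _ _).2 ⟨p.natDegree + 1, ?_⟩
  change ((seqShift - μ • 1) ^ (p.natDegree + 1) : Module.End ℂ (ℕ → ℂ))
    (fun j => (p.eval ∘ Nat.cast) j * μ ^ j) = 0
  rw [pow_seqShift_sub_smul_geom, fwdDiff_iter_comp_natCast,
    p.fwdDiff_iter_degree_add_one_eq_zero]
  ext j
  simp

lemma maxGenEigenspace_le_range_expPoly {μ : ℂ} (hμ : μ ≠ 0) :
    seqShift.maxGenEigenspace μ ≤ LinearMap.range (expPoly μ) := by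
  intro f hf
  obtain ⟨k, hk⟩ := (Module.End.mem_maxGenEigenspace _ _ _).1 hf
  set g : ℕ → ℂ := fun j => f j * μ⁻¹ ^ j
  have hfg : f = fun j => g j * μ ^ j := by
    ext j
    simp [g, mul_assoc, inv_pow, inv_mul_cancel₀ (pow_ne_zero j hμ)]
  have hg : (fwdDiff 1)^[k] g = 0 := by
    rw [hfg, pow_seqShift_sub_smul_geom, smul_eq_zero] at hk
    ext j
    simpa [hμ] using congrFun (hk.resolve_left (pow_ne_zero k hμ)) j
  obtain ⟨p, hp⟩ := exists_eval_eq_of_fwdDiff_iter_eq_zero hg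
  exact ⟨p, by rw [hfg]; ext j; simp [expPoly_apply, hp]⟩

lemma expPoly_comp_add_mul (μ : ℂ) (p : ℂ[X]) (a d : ℕ) :
    (fun t : ℕ => expPoly μ p (a + t * d)) =
      expPoly (μ ^ d) (μ ^ a • p.comp (C (a : ℂ) + X * C (d : ℂ))) := by
  ext t
  simp only [expPoly_apply, eval_smul, eval_comp, eval_add, eval_mul, eval_C, eval_X,
    smul_eq_mul, pow_add, pow_mul', Nat.cast_add, Nat.cast_mul]
  ring

lemma eq_of_expPoly_add_mul_eq {μ : ℂ} (hμ : μ ≠ 0) {d : ℕ} (hd : d ≠ 0) (a : ℕ) {p q : ℂ[X]}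
    (h : ∀ t : ℕ, expPoly μ p (a + t * d) = expPoly μ q (a + t * d)) : p = q := by
  rw [← sub_eq_zero]
  refine eq_zero_of_infinite_isRoot _ (Set.infinite_of_injective_forall_mem
    (f := fun t : ℕ => ((a + t * d : ℕ) : ℂ)) (fun t₁ t₂ ht => ?_) fun t => ?_)
  · simpa [hd] using ht
  · simpa [expPoly_apply, sub_eq_zero, hμ] using h t

noncomputable def expPolySpan (G : Subgroup ℂˣ) : Submodule ℂ (ℕ → ℂ) :=
  ⨆ μ : G, LinearMap.range (expPoly (μ : ℂˣ))

lemma expPolySpan_mul_le (G : Subgroup ℂˣ) :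
    expPolySpan G * expPolySpan G ≤ expPolySpan G := by
  rw [expPolySpan, Submodule.iSup_mul]
  refine iSup_le fun μ => ?_
  rw [Submodule.mul_iSup]
  refine iSup_le fun ν => Submodule.mul_le.2 ?_
  rintro _ ⟨p, rfl⟩ _ ⟨q, rfl⟩
  exact Submodule.mem_iSup_of_mem (μ * ν) ⟨p * q, by simp [expPoly_mul_expPoly]⟩

noncomputable def expPolySubalgebra (G : Subgroup ℂˣ) : Subalgebra ℂ (ℕ → ℂ) :=
  (expPolySpan G).toSubalgebra
    (Submodule.mem_iSup_of_mem 1 ⟨1, by ext j; simp [expPoly_apply]⟩)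
    fun _ _ hf hg => expPolySpan_mul_le G (Submodule.mul_mem_mul hf hg)

lemma injective_coe_pow_of_forall_pow_eq_one {G : Subgroup ℂˣ} {d : ℕ}
    (hG : ∀ μ ∈ G, μ ^ d = 1 → μ = 1) : Function.Injective fun μ : G => ((μ : ℂˣ) : ℂ) ^ d := by
  intro μ ν hμν
  have hpow : (μ : ℂˣ) ^ d = (ν : ℂˣ) ^ d := Units.ext (by simpa using hμν)
  have h1 := hG _ (μ / ν).2 (by rw [Subgroup.coe_div, div_pow, hpow, div_self'])
  exact Subtype.ext (div_eq_one.1 (by simpa using h1))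

lemma eq_const_of_forall_add_mul_eq {G : Subgroup ℂˣ} {d : ℕ} (hd : 0 < d)
    (hG : ∀ μ ∈ G, μ ^ d = 1 → μ = 1) {f : ℕ → ℂ} (hf : f ∈ expPolySubalgebra G) (a : ℕ)
    (h : ∀ t : ℕ, f (a + t * d) = f a) : f = fun _ => f a := by
  classical
  obtain ⟨c, hc, hcf⟩ := (Submodule.mem_iSup_iff_exists_finsupp _ _).1 hf
  choose p hp using hc
  set s := insert 1 c.support
  have hfs : f = ∑ μ ∈ s, expPoly (μ : ℂˣ) (p μ) := by
    simp only [hp, ← hcf]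
    exact Finsupp.sum_of_support_subset c (Finset.subset_insert _ _) _ fun _ _ => rfl
  set q : G → ℂ[X] := fun μ => if μ = 1 then C (f a) else 0
  have hq : ∑ μ ∈ s, expPoly (μ : ℂˣ) (q μ) = fun _ => f a := by
    rw [Finset.sum_eq_single_of_mem 1 (Finset.mem_insert_self _ _) fun μ _ hμ => by simp [q, hμ]]
    ext j
    simp [q, expPoly_apply]
  -- Sampling along `a + dℕ` sends the `μ`-part into the generalized `μ ^ d`-eigenspace of the
  -- shift, and these eigenvalues are distinct.
  let D : (ℕ → ℂ) →ₗ[ℂ] ℕ → ℂ := LinearMap.funLeft ℂ ℂ fun t => a + t * d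
  have hD : ∀ (r : G → ℂ[X]) (μ : G),
      D (expPoly (μ : ℂˣ) (r μ)) ∈ seqShift.maxGenEigenspace (((μ : ℂˣ) : ℂ) ^ d) :=
    fun r μ => range_expPoly_le_maxGenEigenspace _ ⟨_, (expPoly_comp_add_mul _ (r μ) a d).symm⟩
  have key := (iSupIndep_iff_finsetSum_eq_imp_eq _).1
    ((Module.End.independent_maxGenEigenspace seqShift).comp
      (injective_coe_pow_of_forall_pow_eq_one hG))
    s _ _ (fun μ _ => ⟨hD p μ, hD q μ⟩) (by
      rw [← map_sum, ← map_sum, ← hfs, hq]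
      ext t
      exact h t)
  have hpq : ∀ μ ∈ s, p μ = q μ := fun μ hμ =>
    eq_of_expPoly_add_mul_eq (Units.ne_zero _) hd.ne' a (congrFun (key μ hμ))
  rw [← hq, hfs]
  exact Finset.sum_congr rfl fun μ hμ => by rw [hpq μ hμ]

lemma mem_spectrum_of_mem_maxGenEigenspace {R M : Type*} [CommRing R] [AddCommGroup M]
    [Module R M] {f : Module.End R M} {μ : R} {v : M} (hv : v ∈ f.maxGenEigenspace μ)
    (hv0 : v ≠ 0) : μ ∈ spectrum R f :=
  Module.End.HasUnifEigenvalue.mem_spectrum <|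
    Module.End.HasUnifEigenvalue.lt one_pos fun h => hv0 <| by
      rwa [Module.End.maxGenEigenspace, h, Submodule.mem_bot] at hv

lemma orbit_mem_expPolySubalgebra {V : Type*} [AddCommGroup V] [Module ℂ V]
    [FiniteDimensional ℂ V] {f : Module.End ℂ V} (hf : IsUnit f) {G : Subgroup ℂˣ}
    (hG : ∀ μ : ℂˣ, (μ : ℂ) ∈ spectrum ℂ f → μ ∈ G) (ψ : V →ₗ[ℂ] ℂ) (v : V) :
    (fun j => ψ ((f ^ j) v)) ∈ expPolySubalgebra G := by
  have hv : v ∈ ⨆ μ, f.maxGenEigenspace μ := by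
    rw [Module.End.iSup_maxGenEigenspace_eq_top]
    trivial
  refine Submodule.iSup_induction _ (motive := fun v => (fun j => ψ ((f ^ j) v)) ∈ _) hv
    (fun μ w hw => ?_) ?_ fun w₁ w₂ h₁ h₂ => ?_
  · by_cases hw0 : w = 0
    · simp only [hw0, map_zero]
      exact zero_mem _
    have hμ := mem_spectrum_of_mem_maxGenEigenspace hw hw0
    have hμ0 : μ ≠ 0 := fun h => (spectrum.zero_mem_iff ℂ).1 (h ▸ hμ) hf
    refine Submodule.mem_iSup_of_mem ⟨Units.mk0 μ hμ0, hG _ hμ⟩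
      (maxGenEigenspace_le_range_expPoly hμ0 ?_)
    obtain ⟨k, hk⟩ := (Module.End.mem_maxGenEigenspace _ _ _).1 hw
    refine (Module.End.mem_maxGenEigenspace _ _ _).2 ⟨k, ?_⟩
    rw [pow_seqShift_sub_smul_orbit, hk]
    ext j
    simp
  · simp only [map_zero]
    exact zero_mem _
  · simp only [map_add]
    exact add_mem h₁ h₂

lemma Matrix.det_mem {R A ι : Type*} [CommRing R] [CommRing A] [Algebra R A] [Fintype ι]
    [DecidableEq ι] (S : Subalgebra R A) {M : Matrix ι ι A} (hM : ∀ i j, M i j ∈ S) :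
    M.det ∈ S := by
  rw [Matrix.det_apply]
  exact sum_mem fun σ _ => by
    rw [Units.smul_def]
    exact zsmul_mem (prod_mem fun i _ => hM _ _) _

lemma Matrix.det_mem_pi {R A κ ι : Type*} [CommRing R] [CommRing A] [Algebra R A] [Fintype ι]
    [DecidableEq ι] (S : Subalgebra R (κ → A)) {M : κ → Matrix ι ι A}
    (hM : ∀ a b, (fun j => M j a b) ∈ S) : (fun j => (M j).det) ∈ S := by
  have : (fun j => (M j).det) = (Matrix.of fun a b j => M j a b).det := funext fun j =>
    (RingHom.map_det (Pi.evalRingHom (fun _ => A) j) (.of fun a b j => M j a b)).symm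
  rw [this]
  exact Matrix.det_mem S hM

theorem det_one_sub_mul_eq_of_isNet {n : ℕ} {B : Matrix (Fin n) (Fin n) ℂ} (hB : IsUnit B)
    (hnet : B.IsNet) (X : Matrix (Fin n) (Fin n) ℂ) {N : ℕ} (hN : 0 < N)
    (h : ∀ t : ℕ, (1 - B ^ (1 + t * N) * X).det = (1 - B * X).det) :
    (1 - B * X).det = (1 - X).det := by
  set G := Subgroup.closure {u : ℂˣ | (u : ℂ) ∈ spectrum ℂ B}
  have hpow : ∀ a b, (fun j => (B ^ j) a b) ∈ expPolySubalgebra G := fun a b => by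
    have := orbit_mem_expPolySubalgebra (G := G) (hB.map Matrix.toLinAlgEquiv')
      (fun μ hμ => Subgroup.subset_closure (by rwa [AlgEquiv.spectrum_eq] at hμ))
      (LinearMap.proj a) (Pi.single b 1)
    simpa [← map_pow, Matrix.mulVec_single] using this
  have hF : (fun j => (1 - B ^ j * X).det) ∈ expPolySubalgebra G :=
    Matrix.det_mem_pi _ fun a b => by
      have : (fun j => (1 - B ^ j * X) a b) = algebraMap ℂ _ ((1 : Matrix _ _ ℂ) a b) -
          ∑ c, (fun j => (B ^ j) a c) * algebraMap ℂ _ (X c b) := by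
        ext j
        simp [Matrix.mul_apply]
      rw [this]
      exact sub_mem (algebraMap_mem _ _)
        (sum_mem fun c _ => mul_mem (hpow a c) (algebraMap_mem _ _))
  have hconst := eq_const_of_forall_add_mul_eq hN (fun μ hμ => hnet μ hμ N hN) hF 1
    (by simpa [add_comm] using h)
  simpa using (congrFun hconst 0).symm

lemma periodic_det_one_sub_mul {V ι R : Type*} [AddCommGroup V] [Fintype ι] [DecidableEq ι]
    [CommRing R] {A : V → Matrix ι ι R} (hA0 : A 0 = 1) (hA : ∀ v w, A (v + w) = A v * A w)
    {X : Matrix ι ι R} {a b : V} (h : X * A a = A b * X) :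
    Function.Periodic (fun x => (1 - A x * X).det) (b - a) := by
  intro x
  have hinv : ∀ v, A v * A (-v) = 1 := fun v => by rw [← hA, add_neg_cancel, hA0]
  have hXa : X * A (-a) = A (-b) * X := by
    calc X * A (-a) = A (-b) * (A b * X) * A (-a) := by
          rw [← mul_assoc, ← hA, neg_add_cancel, hA0, one_mul]
      _ = A (-b) * X * (A a * A (-a)) := by rw [← h]; simp only [mul_assoc]
      _ = A (-b) * X := by rw [hinv, mul_one]
  have hconj : A a * (1 - A (x + (b - a)) * X) * A (-a) = 1 - A x * X := by
    rw [mul_sub, sub_mul, mul_one, hinv, mul_assoc, mul_assoc, hXa, ← mul_assoc, ← mul_assoc,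
      ← hA, ← hA, show a + (x + (b - a)) + -b = x by abel]
  change (1 - A (x + (b - a)) * X).det = (1 - A x * X).det
  rw [← hconj, Matrix.det_mul, Matrix.det_mul, mul_right_comm, ← Matrix.det_mul, hinv,
    Matrix.det_one, one_mul]

lemma exists_pos_forall_periodic_nsmul {ι β : Type*} [Fintype ι] [DecidableEq ι]
    {f : (ι → ℤ) → β} {M : Matrix ι ι ℤ} (hM : M.det ≠ 0)
    (hf : ∀ v, Function.Periodic f (M *ᵥ v)) :
    ∃ N : ℕ, 0 < N ∧ ∀ u, Function.Periodic f (N • u) := by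
  refine ⟨M.det.natAbs * M.det.natAbs, by simpa [Nat.pos_iff_ne_zero] using hM, fun u => ?_⟩
  have h1 : Function.Periodic f (M.det • u) := by
    simpa [Matrix.mulVec_mulVec, Matrix.mul_adjugate, Matrix.smul_mulVec] using
      hf (M.adjugate *ᵥ u)
  have := h1.zsmul M.det
  rwa [smul_smul, ← Int.natAbs_mul_self, natCast_zsmul] at this

lemma Matrix.exists_map_intCast_eq {ι : Type*} [Fintype ι] [DecidableEq ι] {Φ : Matrix ι ι ℚ}
    (h : ∀ v : ι → ℤ, ∃ w : ι → ℤ, Φ *ᵥ (fun t => (v t : ℚ)) = fun t => (w t : ℚ)) :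
    ∃ Ψ : Matrix ι ι ℤ, Ψ.map (↑) = Φ := by
  choose w hw using h
  refine ⟨.of fun i j => w (Pi.single j 1) i, ?_⟩
  ext i j
  simpa [Pi.single_apply, Matrix.mulVec, dotProduct] using (congrFun (hw (Pi.single j 1)) i).symm

lemma exists_pos_forall_periodic_det_one_sub_mul {ι κ R : Type*} [Fintype ι] [DecidableEq ι]
    [Fintype κ] [DecidableEq κ] [CommRing R] {X : Matrix κ κ R} {Φ : Matrix ι ι ℚ}
    {A : (ι → ℤ) → Matrix κ κ R} (hA1 : A 0 = 1) (hAmul : ∀ v w, A (v + w) = A v * A w)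
    (hΦ1 : (Φ - 1).det ≠ 0) {k : ℕ} (hk : 0 < k)
    (hΦint : ∀ v : ι → ℤ, ∃ w : ι → ℤ,
      Φ.mulVec (fun t => (((k : ℤ) * v t : ℤ) : ℚ)) = fun t => ((w t : ℤ) : ℚ))
    (hcomm : ∀ v w : ι → ℤ,
      (Φ.mulVec (fun t => (((k : ℤ) * v t : ℤ) : ℚ)) = fun t => ((w t : ℤ) : ℚ)) →
      X * A ((k : ℤ) • v) = A w * X) :
    ∃ N : ℕ, 0 < N ∧ ∀ u, Function.Periodic (fun x => (1 - A x * X).det) (N • u) := by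
  have hkΦ : ∀ v : ι → ℤ, Φ *ᵥ (fun t => (((k : ℤ) * v t : ℤ) : ℚ)) =
      ((k : ℚ) • Φ) *ᵥ fun t => (v t : ℚ) := fun v => by
    ext i
    simp only [Matrix.mulVec, dotProduct, Matrix.smul_apply, smul_eq_mul]
    push_cast
    exact Finset.sum_congr rfl fun _ _ => by ring
  obtain ⟨Ψ, hΨ⟩ := Matrix.exists_map_intCast_eq fun v => hkΦ v ▸ hΦint v
  refine exists_pos_forall_periodic_nsmul (M := Ψ - (k : ℤ) • 1) ?_ fun w => ?_
  · have hcast : (((Ψ - (k : ℤ) • 1).det : ℤ) : ℚ) = (k : ℚ) ^ Fintype.card ι * (Φ - 1).det := by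
      rw [Int.cast_det, show (Ψ - (k : ℤ) • 1).map (fun x => (x : ℚ)) =
        (Int.castRingHom ℚ).mapMatrix (Ψ - (k : ℤ) • 1) from rfl]
      simp only [map_sub, map_zsmul, map_one, RingHom.mapMatrix_apply, Int.coe_castRingHom, hΨ]
      rw [natCast_zsmul, ← Nat.cast_smul_eq_nsmul ℚ, ← smul_sub, Matrix.det_smul]
    have hk' : (k : ℚ) ≠ 0 := by exact_mod_cast hk.ne'
    exact_mod_cast hcast ▸ mul_ne_zero (pow_ne_zero _ hk') hΦ1
  · have hw : Φ *ᵥ (fun t => (((k : ℤ) * w t : ℤ) : ℚ)) = fun t => ((Ψ *ᵥ w) t : ℚ) := by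
      rw [hkΦ, ← hΨ]
      ext i
      simp [Matrix.mulVec, dotProduct]
    simpa [Matrix.sub_mulVec, Matrix.smul_mulVec] using
      periodic_det_one_sub_mul hA1 hAmul (hcomm w _ hw)

lemma Int.cast_det_one_sub_mul {ι R : Type*} [Fintype ι] [DecidableEq ι] [CommRing R]
    (M X : Matrix ι ι ℤ) :
    (((1 - M * X).det : ℤ) : R) = (1 - M.map (Int.cast : ℤ → R) * X.map Int.cast).det := by
  rw [Int.cast_det, show (1 - M * X).map (fun x => (x : R)) =
    (Int.castRingHom R).mapMatrix (1 - M * X) from rfl]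
  simp only [map_sub, map_one, map_mul, RingHom.mapMatrix_apply, Int.coe_castRingHom]

theorem det_one_sub_smul_eq_of_net_general {n m : ℕ}
    (X : Matrix (Fin n) (Fin n) ℤ) (Φ : Matrix (Fin m) (Fin m) ℚ)
    (A : (Fin m → ℤ) → Matrix (Fin n) (Fin n) ℤ)
    (hA1 : A 0 = 1) (hAmul : ∀ v w, A (v + w) = A v * A w)
    (hAnet : ∀ v, ((A v).map (Int.cast : ℤ → ℂ)).IsNet)
    (hΦ1 : (Φ - 1).det ≠ 0)
    (k : ℕ) (hk : 0 < k)
    (hΦint : ∀ v : Fin m → ℤ, ∃ w : Fin m → ℤ,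
      Φ.mulVec (fun t => (((k : ℤ) * v t : ℤ) : ℚ)) = fun t => ((w t : ℤ) : ℚ))
    (hcomm : ∀ v w : Fin m → ℤ,
      (Φ.mulVec (fun t => (((k : ℤ) * v t : ℤ) : ℚ)) = fun t => ((w t : ℤ) : ℚ)) →
      X * A ((k : ℤ) • v) = A w * X) :
    ∀ v : Fin m → ℤ, (1 - A v * X).det = (1 - X).det := by
  obtain ⟨N, hN, hper⟩ :=
    exists_pos_forall_periodic_det_one_sub_mul hA1 hAmul hΦ1 hk hΦint hcomm
  intro v
  have hpow : ∀ j : ℕ, (A (j • v)).map (Int.cast : ℤ → ℂ) = (A v).map Int.cast ^ j := by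
    intro j
    have hA : A (j • v) = A v ^ j := by
      induction j with
      | zero => simpa using hA1
      | succ j ih => rw [succ_nsmul, hAmul, ih, pow_succ]
    rw [hA]
    exact Matrix.map_pow (A v) (Int.castRingHom ℂ) j
  have hunit : IsUnit ((A v).map (Int.cast : ℤ → ℂ)) :=
    (IsUnit.of_mul_eq_one (A (-v)) (by rw [← hAmul, add_neg_cancel, hA1])).map
      (Int.castRingHom ℂ).mapMatrix
  have h1 : (((1 - X).det : ℤ) : ℂ) = (1 - X.map (Int.cast : ℤ → ℂ)).det := by
    simpa using Int.cast_det_one_sub_mul (R := ℂ) 1 X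
  apply Int.cast_injective (α := ℂ)
  rw [Int.cast_det_one_sub_mul, h1]
  refine det_one_sub_mul_eq_of_isNet hunit (hAnet v) _ hN fun t => ?_
  rw [← hpow, ← Int.cast_det_one_sub_mul, ← Int.cast_det_one_sub_mul,
    show (1 + t * N) • v = v + t • N • v by rw [add_smul, one_smul, mul_smul]]
  exact congrArg Int.cast ((hper v).nsmul t v)

/-- Let `X` be an `n×n` integer matrix, `Φ` an `m×m` rational matrix, and
`A : ℤ^m → SL_n(ℤ)` a group homomorphism such that every `A v` is net.  If `1` is not an
eigenvalue of `Φ`, and there is a positive integer `k` with `Φ·(k v) ∈ ℤ^m` for all `v` and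
`X·A(k v) = A(Φ·(k v))·X` for all `v`, then `det(I − A(v)·X) = det(I − X)` for all `v ∈ ℤ^m`. -/
theorem det_one_sub_smul_eq_of_net {n m : ℕ}
    (X : Matrix (Fin n) (Fin n) ℤ) (Φ : Matrix (Fin m) (Fin m) ℚ)
    (A : (Fin m → ℤ) → Matrix (Fin n) (Fin n) ℤ)
    (hA1 : A 0 = 1) (hAmul : ∀ v w, A (v + w) = A v * A w)
    (hAdet : ∀ v, (A v).det = 1)
    (hAnet : ∀ v, ((A v).map (Int.cast : ℤ → ℂ)).IsNet)
    (hΦ1 : (Φ - 1).det ≠ 0)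
    (k : ℕ) (hk : 0 < k)
    (hΦint : ∀ v : Fin m → ℤ, ∃ w : Fin m → ℤ,
      Φ.mulVec (fun t => (((k : ℤ) * v t : ℤ) : ℚ)) = fun t => ((w t : ℤ) : ℚ))
    (hcomm : ∀ v w : Fin m → ℤ,
      (Φ.mulVec (fun t => (((k : ℤ) * v t : ℤ) : ℚ)) = fun t => ((w t : ℤ) : ℚ)) →
      X * A ((k : ℤ) • v) = A w * X) :
    ∀ v : Fin m → ℤ, (1 - A v * X).det = (1 - X).det :=
  det_one_sub_smul_eq_of_net_general X Φ A hA1 hAmul hAnet hΦ1 k hk hΦint hcomm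
end

section
/- Let U be an invertible n×n rational matrix that is unipotent, let M be an n×n complex matrix, and let d be a positive integer. If det(I − U^{d z}·M) = det(I − M) for every integer z, then det(I − U^{z}·M) = det(I − M) for every integer z. -/
/-!
Writing `U = 1 + N` with `N` nilpotent, `U ^ z = ∑_{k < n} (z choose k) • N ^ k` for every integer
`z`, and `z choose k` is a polynomial in `z`. Hence `det (1 - U ^ z * M)` is the value at `z` of a
single complex polynomial. By hypothesis this polynomial takes the value `det (1 - M)` on the
infinite set `dℤ`, so it is constant.
-/

open Polynomial Finset

theorem Units.val_zpow_eq_sum_choose_smul_pow {A : Type*} [Ring A] (u : Aˣ) {n : ℕ}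
    (hu : ((u : A) - 1) ^ n = 0) (z : ℤ) :
    ((u ^ z : Aˣ) : A) = ∑ k ∈ range n, Ring.choose z k • ((u : A) - 1) ^ k := by
  set N := (u : A) - 1
  set W : ℤ → A := fun z => ∑ k ∈ range n, Ring.choose z k • N ^ k
  suffices key : ∀ z : ℤ, ((u ^ z : Aˣ) : A) = W z from key z
  have hextend : ∀ c : ℕ → ℤ, ∑ k ∈ range (n + 1), c k • N ^ k = ∑ k ∈ range n, c k • N ^ k :=
    fun c => by rw [sum_range_succ, hu, smul_zero, add_zero]
  have hW0 : W 0 = 1 := by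
    rcases n with _ | n
    · have := subsingleton_of_zero_eq_one (by simpa using hu.symm : (0 : A) = 1)
      exact Subsingleton.elim _ _
    · simp [W, sum_range_succ', Ring.choose_zero_succ]
  have hWsucc : ∀ z, W (z + 1) = u * W z := fun z => calc
    W (z + 1) = ∑ k ∈ range n, (Ring.choose z k + Ring.choose z (k + 1)) • N ^ (k + 1) + 1 := by
      simp only [W, ← hextend, sum_range_succ' _ n, Ring.choose_succ_succ, Ring.choose_zero_right,
        pow_zero, one_smul]
    _ = N * W z +
          (∑ k ∈ range n, Ring.choose z (k + 1) • N ^ (k + 1) + Ring.choose z 0 • N ^ 0) := by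
      simp only [W, add_smul, sum_add_distrib, mul_sum, mul_smul_comm, ← pow_succ',
        Ring.choose_zero_right, pow_zero, one_smul, add_assoc]
    _ = u * W z := by
      rw [← sum_range_succ' (fun k => Ring.choose z k • N ^ k), hextend]
      exact (add_one_mul N (W z)).symm.trans (by rw [sub_add_cancel])
  intro z
  induction z using Int.induction_on with
  | zero => simpa using hW0.symm
  | succ i ih => rw [zpow_add_one, ← (Commute.self_zpow u i).eq, Units.val_mul, ih, hWsucc]
  | pred i ih =>
    rw [zpow_sub_one, ← (Commute.self_zpow u _).inv_left.eq, Units.val_mul, ih,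
      Units.inv_mul_eq_iff_eq_mul, ← hWsucc, sub_add_cancel]

theorem Ring.choose_eq_inv_factorial_mul_eval_descPochhammer {K : Type*} [Field K] [CharZero K]
    (a : K) (k : ℕ) :
    Ring.choose a k = (k.factorial : K)⁻¹ * (descPochhammer K k).eval a := by
  rw [Ring.choose_eq_smul, smul_eq_mul, ← aeval_eq_smeval, aeval_def, algebraMap_int_eq,
    ← eval_map, descPochhammer_map]

theorem Polynomial.eq_C_of_forall_eval_mul_intCast_eq {R : Type*} [CommRing R] [IsDomain R]
    [CharZero R] (p : R[X]) {d c : R} (hd : d ≠ 0) (h : ∀ z : ℤ, p.eval (d * z) = c) :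
    p = C c :=
  eq_of_infinite_eval_eq p (C c) <|
    (Set.infinite_range_of_injective ((mul_right_injective₀ hd).comp Int.cast_injective)).mono
      (by rintro _ ⟨z, rfl⟩; simp [h])

theorem Matrix.exists_eval_eq_det_one_sub_sum_choose_smul_pow_mul {ι K : Type*} [Fintype ι]
    [DecidableEq ι] [Field K] [CharZero K] (N M : Matrix ι ι K) (m : ℕ) :
    ∃ p : K[X], ∀ a : K,
      (1 - (∑ k ∈ range m, Ring.choose a k • N ^ k) * M).det = p.eval a := by
  refine ⟨(1 - (∑ k ∈ range m, ((k.factorial : K)⁻¹ • descPochhammer K k) • (N ^ k).map C) *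
    M.map C).det, fun a => ?_⟩
  rw [← coe_evalRingHom, RingHom.map_det, RingHom.map_sub, RingHom.map_one, RingHom.map_mul]
  congr 3
  · ext i j
    simp [Matrix.sum_apply, Ring.choose_eq_inv_factorial_mul_eval_descPochhammer, mul_assoc]
  · ext i j
    simp

theorem Matrix.exists_eval_eq_det_one_sub_zpow_mul {ι K : Type*} [Fintype ι] [DecidableEq ι]
    [Field K] [CharZero K] (u : (Matrix ι ι K)ˣ) {m : ℕ} (hu : ((u : Matrix ι ι K) - 1) ^ m = 0)
    (M : Matrix ι ι K) :
    ∃ p : K[X], ∀ z : ℤ,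
      (1 - ((u ^ z : (Matrix ι ι K)ˣ) : Matrix ι ι K) * M).det = p.eval (z : K) := by
  obtain ⟨p, hp⟩ := exists_eval_eq_det_one_sub_sum_choose_smul_pow_mul ((u : Matrix ι ι K) - 1) M m
  have hcast : ∀ (z : ℤ) k, ((Ring.choose z k : ℤ) : K) = Ring.choose (z : K) k :=
    fun z k => by simpa using Ring.map_choose (Int.castRingHom K) z k
  refine ⟨p, fun z => ?_⟩
  simp only [← hp, u.val_zpow_eq_sum_choose_smul_pow hu, ← Int.cast_smul_eq_zsmul K, hcast]

/-- Let `U` be an invertible unipotent `n×n` rational matrix, `M` an `n×n` complex matrix and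
`d` a positive integer.  If `det(I − U^{dz}·M) = det(I − M)` for every integer `z`, then
`det(I − U^{z}·M) = det(I − M)` for every integer `z`. -/
theorem det_one_sub_zpow_mul_of_unipotent {n : ℕ}
    (U : (Matrix (Fin n) (Fin n) ℚ)ˣ)
    (hU : ((U : Matrix (Fin n) (Fin n) ℚ) - 1) ^ n = 0)
    (M : Matrix (Fin n) (Fin n) ℂ) (d : ℕ) (hd : 0 < d)
    (h : ∀ z : ℤ,
      (1 - ((U ^ ((d : ℤ) * z) : (Matrix (Fin n) (Fin n) ℚ)ˣ) :
        Matrix (Fin n) (Fin n) ℚ).map (Rat.cast : ℚ → ℂ) * M).det = (1 - M).det) :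
    ∀ z : ℤ,
      (1 - ((U ^ z : (Matrix (Fin n) (Fin n) ℚ)ˣ) :
        Matrix (Fin n) (Fin n) ℚ).map (Rat.cast : ℚ → ℂ) * M).det = (1 - M).det := by
  set V := Units.map (Rat.castHom ℂ).mapMatrix.toMonoidHom U
  have hV : ((V : Matrix (Fin n) (Fin n) ℂ) - 1) ^ n = 0 := by
    change ((Rat.castHom ℂ).mapMatrix (U : Matrix (Fin n) (Fin n) ℚ) - 1) ^ n = 0
    rw [← map_one (Rat.castHom ℂ).mapMatrix, ← map_sub, ← map_pow, hU, map_zero]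
  have hzpow : ∀ z : ℤ, ((U ^ z : (Matrix (Fin n) (Fin n) ℚ)ˣ) : Matrix (Fin n) (Fin n) ℚ).map
      (Rat.cast : ℚ → ℂ) = ((V ^ z : (Matrix (Fin n) (Fin n) ℂ)ˣ) : Matrix (Fin n) (Fin n) ℂ) :=
    fun z => by simp only [V, ← map_zpow, Units.coe_map]; rfl
  obtain ⟨p, hp⟩ := Matrix.exists_eval_eq_det_one_sub_zpow_mul V hV M
  have hpC : p = C (1 - M).det :=
    p.eq_C_of_forall_eval_mul_intCast_eq (d := d) (by exact_mod_cast hd.ne') fun z => by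
      rw [← h z, hzpow, hp, Int.cast_mul, Int.cast_natCast]
  intro z
  rw [hzpow, hp, hpC, eval_C]
end

section
/- Let Φ be an m×m rational matrix not having 1 as an eigenvalue, let U : ℤ^m → GL_n(ℚ) be a group homomorphism such that U(v) is unipotent for every v ∈ ℤ^m, and let M be an n×n complex matrix. Suppose there is a positive integer d such that Φ·(d v) ∈ ℤ^m for all v ∈ ℤ^m and M·U(d v) = U(Φ·(d v))·M for all v ∈ ℤ^m. Then det(I − U(v)·M) = det(I − M) for all v ∈ ℤ^m. -/
/-- A square rational matrix of size `n` is unipotent if `(M - I)^n = 0`. -/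
def IsUnipotentMat {n : ℕ} (M : Matrix (Fin n) (Fin n) ℚ) : Prop :=
  (M - 1) ^ n = 0

/-!
Write `F u = det (1 - U(u) M)`. The intertwining relation together with
`det (1 - X Y) = det (1 - Y X)` gives `F (u + d s) = F (u + Φ (d s))`. As `Φ - 1` is invertible
over `ℚ`, there are `c > 0` and an integer vector `y` with `(Φ - 1) y = c v`; taking `s = t y` and
`u = -d t y` yields `F (d c t v) = F 0` for every `t : ℕ`. Since `U v` is unipotent, the binomial
expansion of `U(v)^s` makes `s ↦ F (s v)` a polynomial in `s`, which is therefore constant.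
-/

open Polynomial Finset

lemma one_add_pow_eq_sum_choose_of_pow_eq_zero {A : Type*} [Semiring A] {N : A} {n : ℕ}
    (hN : N ^ n = 0) (s : ℕ) :
    (1 + N) ^ s = ∑ k ∈ range n, s.choose k • N ^ k := by
  have hvanish : ∀ k, s < k ∨ n ≤ k → s.choose k • N ^ k = 0 := by
    rintro k (hk | hk)
    · rw [Nat.choose_eq_zero_of_lt hk, zero_smul]
    · rw [pow_eq_zero_of_le hk hN, smul_zero]
  calc (1 + N) ^ s = ∑ k ∈ range (s + 1), s.choose k • N ^ k := by
        rw [add_comm, (Commute.one_right N).add_pow]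
        simp only [one_pow, mul_one, nsmul_eq_mul']
    _ = ∑ k ∈ range (s + 1 + n), s.choose k • N ^ k :=
        sum_subset (range_mono (by omega)) fun k _ hk => hvanish k (by rw [mem_range] at hk; omega)
    _ = ∑ k ∈ range n, s.choose k • N ^ k :=
        (sum_subset (range_mono (by omega)) fun k _ hk => hvanish k (by rw [mem_range] at hk; omega)).symm

lemma Polynomial.eq_C_of_forall_eval_natCast_mul_eq {R : Type*} [CommRing R] [IsDomain R]
    [CharZero R] {p : R[X]} {N : ℕ} (hN : 0 < N) {a : R}
    (h : ∀ t : ℕ, p.eval ((N * t : ℕ) : R) = a) : p = C a := by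
  refine eq_of_infinite_eval_eq _ _ (Set.infinite_of_injective_forall_mem
    (f := fun t : ℕ => ((N * t : ℕ) : R)) (fun s t hst => ?_) fun t => ?_)
  · simpa [hN.ne'] using hst
  · simp only [Set.mem_ofPred_eq, h, eval_C]

lemma exists_pos_natCast_mul_eq_intCast {ι : Type*} [Fintype ι] (z : ι → ℚ) :
    ∃ c : ℕ, 0 < c ∧ ∃ y : ι → ℤ, ∀ i, (c : ℚ) * z i = y i := by
  classical
  refine ⟨∏ i, (z i).den, prod_pos fun i _ => (z i).pos,
    fun i => (∏ j ∈ univ.erase i, (z j).den : ℕ) * (z i).num, fun i => ?_⟩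
  rw [← prod_erase_mul _ _ (mem_univ i)]
  push_cast
  rw [mul_assoc, Rat.den_mul_eq_num]

namespace Matrix

variable {ι : Type*} [Fintype ι] [DecidableEq ι]

lemma det_one_sub_mul_mul_eq_of_semiconjBy {R : Type*} [CommRing R] {P A B M : Matrix ι ι R}
    (hPA : Commute P A) (hM : SemiconjBy M A B) :
    (1 - P * A * M).det = (1 - P * B * M).det := by
  calc (1 - P * A * M).det = (1 - M * A * P).det := by
        rw [det_one_sub_mul_comm, hPA.eq, mul_assoc]
    _ = (1 - B * (M * P)).det := by rw [hM.eq, mul_assoc]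
    _ = (1 - P * B * M).det := by
        rw [det_one_sub_mul_comm, mul_assoc, det_one_sub_mul_comm, mul_assoc]

lemma det_one_sub_apply_add_mul_eq {G R : Type*} [AddCommMonoid G] [CommRing R]
    {V : G → Matrix ι ι R} (hV : ∀ a b, V (a + b) = V a * V b) {M : Matrix ι ι R} {s w : G}
    (hM : M * V s = V w * M) (u : G) :
    (1 - V (u + s) * M).det = (1 - V (u + w) * M).det := by
  rw [hV, hV]
  exact det_one_sub_mul_mul_eq_of_semiconjBy (by rw [Commute, SemiconjBy, ← hV, ← hV, add_comm]) hM

lemma exists_mulVec_intCast_mul_eq {Φ : Matrix ι ι ℚ} (hΦ : (Φ - 1).det ≠ 0) (v : ι → ℤ) :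
    ∃ c : ℕ, 0 < c ∧ ∃ y : ι → ℤ, ∀ k : ℤ,
      Φ *ᵥ (fun i => ((k * y i : ℤ) : ℚ)) = fun i => ((k * y i + k * c * v i : ℤ) : ℚ) := by
  set z := (Φ - 1)⁻¹ *ᵥ fun i => (v i : ℚ)
  have hz : Φ *ᵥ z = z + fun i => (v i : ℚ) := by
    have hsolve : (Φ - 1) *ᵥ z = fun i => (v i : ℚ) := by
      rw [mulVec_mulVec, mul_nonsing_inv _ (isUnit_iff_ne_zero.mpr hΦ), one_mulVec]
    rwa [sub_mulVec, one_mulVec, sub_eq_iff_eq_add'] at hsolve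
  obtain ⟨c, hc, y, hy⟩ := exists_pos_natCast_mul_eq_intCast z
  refine ⟨c, hc, y, fun k => ?_⟩
  have hky : (fun i => ((k * y i : ℤ) : ℚ)) = (k * c : ℚ) • z := by
    ext i
    simp [← hy, mul_assoc]
  rw [hky, mulVec_smul, hz]
  ext i
  simp only [Pi.smul_apply, Pi.add_apply, smul_eq_mul, Int.cast_add, Int.cast_mul, ← hy,
    Int.cast_natCast]
  ring

variable {K : Type*} [Field K] [CharZero K]

lemma exists_map_eval_eq_pow_of_isNilpotent {A : Matrix ι ι K} (hA : IsNilpotent (A - 1)) :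
    ∃ P : Matrix ι ι K[X], ∀ s : ℕ, P.map (eval (s : K)) = A ^ s := by
  obtain ⟨n, hn⟩ := hA
  refine ⟨∑ k ∈ range n, Ring.choose (X : K[X]) k • (A - 1).map C ^ k, fun s => ?_⟩
  conv_rhs => rw [← add_sub_cancel 1 A, one_add_pow_eq_sum_choose_of_pow_eq_zero hn]
  change (evalRingHom (s : K)).mapMatrix _ = _
  simp only [map_sum]
  refine sum_congr rfl fun k _ => ?_
  rw [RingHom.mapMatrix_apply, map_smul' _ _ _ (map_mul _), ← RingHom.mapMatrix_apply, map_pow]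
  simp [Ring.map_choose, Ring.choose_natCast, Function.comp_def, Nat.cast_smul_eq_nsmul,
    nsmul_eq_mul]

lemma det_one_sub_pow_mul_eq_of_forall_mul {A M : Matrix ι ι K} (hA : IsNilpotent (A - 1))
    {N : ℕ} (hN : 0 < N) (h : ∀ t : ℕ, (1 - A ^ (N * t) * M).det = (1 - M).det) (s : ℕ) :
    (1 - A ^ s * M).det = (1 - M).det := by
  obtain ⟨P, hP⟩ := exists_map_eval_eq_pow_of_isNilpotent hA
  have hp : ∀ s : ℕ, ((1 - P * M.map C).det).eval (s : K) = (1 - A ^ s * M).det := fun s => by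
    rw [← coe_evalRingHom, RingHom.map_det, map_sub, map_one, map_mul, RingHom.mapMatrix_apply,
      coe_evalRingHom, hP, RingHom.mapMatrix_apply, map_map]
    simp [Function.comp_def]
  rw [← hp, eq_C_of_forall_eval_natCast_mul_eq hN fun t => (hp _).trans (h t), eval_C]

end Matrix

theorem det_one_sub_unipotent_mul_general {n m : ℕ}
    (Φ : Matrix (Fin m) (Fin m) ℚ) (hΦ1 : (Φ - 1).det ≠ 0)
    (U : (Fin m → ℤ) → Matrix (Fin n) (Fin n) ℚ)
    (hU1 : U 0 = 1) (hUmul : ∀ v w, U (v + w) = U v * U w)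
    (hUuni : ∀ v, IsUnipotentMat (U v))
    (M : Matrix (Fin n) (Fin n) ℂ)
    (d : ℕ) (hd : 0 < d)
    (hcomm : ∀ v w : Fin m → ℤ,
      (Φ.mulVec (fun t => (((d : ℤ) * v t : ℤ) : ℚ)) = fun t => ((w t : ℤ) : ℚ)) →
      M * (U ((d : ℤ) • v)).map (Rat.cast : ℚ → ℂ) =
        (U w).map (Rat.cast : ℚ → ℂ) * M) :
    ∀ v : Fin m → ℤ,
      (1 - (U v).map (Rat.cast : ℚ → ℂ) * M).det = (1 - M).det := by
  intro v
  set V : (Fin m → ℤ) → Matrix (Fin n) (Fin n) ℂ := fun u => (Rat.castHom ℂ).mapMatrix (U u)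
  have hVmul : ∀ a b, V (a + b) = V a * V b := fun a b => by simp only [V, hUmul, map_mul]
  have hV0 : V 0 = 1 := by simp only [V, hU1, map_one]
  have hVpow : ∀ s : ℕ, V (s • v) = V v ^ s := fun s => by
    induction s with
    | zero => rw [zero_smul, hV0, pow_zero]
    | succ s ih => rw [succ_nsmul, hVmul, ih, pow_succ]
  have hVnil : IsNilpotent (V v - 1) := by
    simpa only [map_sub, map_one] using IsNilpotent.map ⟨n, hUuni v⟩ (Rat.castHom ℂ).mapMatrix
  obtain ⟨c, hc, y, hy⟩ := Matrix.exists_mulVec_intCast_mul_eq hΦ1 v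
  have hperiodic : ∀ t : ℕ, (1 - V v ^ (d * c * t) * M).det = (1 - M).det := fun t => by
    have hMV := hcomm ((t : ℤ) • y) ((d * t : ℤ) • y + (d * t * c : ℤ) • v)
      (by simpa [mul_assoc] using hy (d * t))
    have key := Matrix.det_one_sub_apply_add_mul_eq hVmul hMV (-((d * t : ℤ) • y))
    rw [smul_smul, neg_add_cancel, neg_add_cancel_left, hV0, one_mul] at key
    rw [← hVpow, key, ← natCast_zsmul, mul_right_comm]
    norm_cast
  simpa [V] using Matrix.det_one_sub_pow_mul_eq_of_forall_mul hVnil (Nat.mul_pos hd hc) hperiodic 1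

/-- Let `Φ` be an `m×m` rational matrix not having `1` as an eigenvalue, let
`U : ℤ^m → GL_n(ℚ)` be a group homomorphism with every `U v` unipotent, and `M` an `n×n`
complex matrix.  If there is a positive integer `d` with `Φ·(d v) ∈ ℤ^m` for all `v` and
`M·U(d v) = U(Φ·(d v))·M` for all `v`, then `det(I − U(v)·M) = det(I − M)` for all `v`. -/
theorem det_one_sub_unipotent_mul {n m : ℕ}
    (Φ : Matrix (Fin m) (Fin m) ℚ) (hΦ1 : (Φ - 1).det ≠ 0)
    (U : (Fin m → ℤ) → Matrix (Fin n) (Fin n) ℚ)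
    (hU1 : U 0 = 1) (hUmul : ∀ v w, U (v + w) = U v * U w) (hUunit : ∀ v, IsUnit (U v))
    (hUuni : ∀ v, IsUnipotentMat (U v))
    (M : Matrix (Fin n) (Fin n) ℂ)
    (d : ℕ) (hd : 0 < d)
    (hΦint : ∀ v : Fin m → ℤ, ∃ w : Fin m → ℤ,
      Φ.mulVec (fun t => (((d : ℤ) * v t : ℤ) : ℚ)) = fun t => ((w t : ℤ) : ℚ))
    (hcomm : ∀ v w : Fin m → ℤ,
      (Φ.mulVec (fun t => (((d : ℤ) * v t : ℤ) : ℚ)) = fun t => ((w t : ℤ) : ℚ)) →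
      M * (U ((d : ℤ) • v)).map (Rat.cast : ℚ → ℂ) =
        (U w).map (Rat.cast : ℚ → ℂ) * M) :
    ∀ v : Fin m → ℤ,
      (1 - (U v).map (Rat.cast : ℚ → ℂ) * M).det = (1 - M).det :=
  det_one_sub_unipotent_mul_general Φ hΦ1 U hU1 hUmul hUuni M d hd hcomm
end

section
/- Let s and m be positive integers, let λ_1, …, λ_s : ℤ^m → ℂˣ be group homomorphisms, with indices taken cyclically so that λ_{s+1} = λ_1, and let Φ be an m×m rational matrix not having 1 as an eigenvalue. Suppose there is a positive integer k such that Φ·(k w) ∈ ℤ^m and λ_{i+1}(k w) = λ_i(Φ·(k w)) for all w ∈ ℤ^m and all i ∈ {1,…,s}. Assume moreover that for every v ∈ ℤ^m the multiplicative subgroup of ℂˣ generated by λ_1(v), …, λ_s(v) contains no root of unity other than 1. Then λ_1(v)·λ_2(v)⋯λ_s(v) = 1 for every v ∈ ℤ^m. -/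
/-!
The product `F v = ∏ᵢ λᵢ(v)` is again a homomorphism `ℤ^m → ℂˣ`. As `1` is not an eigenvalue
of `Φ`, clearing denominators in `(Φ - 1)⁻¹ v` gives `y ∈ ℤ^m` and `n ≠ 0` with `Φ y = y + n v`.
Taking the product over `i` of the relations `λ_{i+1}(k y) = λᵢ(k y + k n v)`, the cyclic shift
of indices does not change the left side, so `F(k y) = F(k y) F(v)^{kn}`. Thus `F v` is a root of
unity in the group generated by the `λᵢ(v)`, hence equal to `1`.
-/

open Matrix

theorem map_zsmul_of_map_add {A G : Type*} [AddGroup A] [Group G] {f : A → G}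
    (hf : ∀ a b, f (a + b) = f a * f b) (n : ℤ) (a : A) : f (n • a) = f a ^ n :=
  (MonoidHom.mk' (f ∘ Multiplicative.toAdd) hf).map_zpow (Multiplicative.ofAdd a) n

theorem prod_zpow_eq_one_of_perm {ι A G : Type*} [Fintype ι] [AddGroup A] [CommGroup G]
    (l : ι → A → G) (hl : ∀ i a b, l i (a + b) = l i a * l i b) (σ : Equiv.Perm ι) {x v : A}
    {n : ℤ} (h : ∀ i, l (σ i) x = l i (x + n • v)) : (∏ i, l i v) ^ n = 1 := by
  have hshift : ∏ i, l i x = (∏ i, l i x) * (∏ i, l i v) ^ n :=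
    calc ∏ i, l i x = ∏ i, l (σ i) x := (Equiv.prod_comp σ fun i => l i x).symm
      _ = ∏ i, l i (x + n • v) := Finset.prod_congr rfl fun i _ => h i
      _ = (∏ i, l i x) * (∏ i, l i v) ^ n := by
        simp only [hl, map_zsmul_of_map_add (hl _), Finset.prod_mul_distrib, Finset.prod_zpow]
  exact mul_eq_left.mp hshift.symm

theorem Matrix.exists_mulVec_eq_add_smul_of_det_sub_one_ne_zero {R K ι : Type*} [CommRing R]
    [Field K] [Algebra R K] [IsFractionRing R K] [Fintype ι] [DecidableEq ι] {Φ : Matrix ι ι K}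
    (hΦ : (Φ - 1).det ≠ 0) (v : ι → R) :
    ∃ n : R, n ≠ 0 ∧ ∃ y : ι → R, Φ *ᵥ (algebraMap R K ∘ y) = algebraMap R K ∘ (y + n • v) := by
  set z := (Φ - 1)⁻¹ *ᵥ (algebraMap R K ∘ v)
  have hz : Φ *ᵥ z = z + algebraMap R K ∘ v := by
    have hsolve : (Φ - 1) *ᵥ z = algebraMap R K ∘ v := by
      rw [mulVec_mulVec, mul_nonsing_inv _ (isUnit_iff_ne_zero.mpr hΦ), one_mulVec]
    rwa [sub_mulVec, one_mulVec, sub_eq_iff_eq_add'] at hsolve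
  obtain ⟨⟨n, hn⟩, hint⟩ := IsLocalization.exist_integer_multiples (nonZeroDivisors R) Finset.univ z
  choose y hy using fun i => hint i (Finset.mem_univ i)
  have := (algebraMap R K).domain_nontrivial
  refine ⟨n, nonZeroDivisors.ne_zero hn, y, ?_⟩
  have hyz : algebraMap R K ∘ y = n • z := funext hy
  rw [hyz, mulVec_smul, hz]
  ext i
  simp [Algebra.smul_def, mul_add, hy]

theorem prod_eigenvalue_homs_eq_one_general {s m : ℕ} [NeZero s]
    (l : Fin s → (Fin m → ℤ) → ℂˣ)
    (hlmul : ∀ i v w, l i (v + w) = l i v * l i w)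
    (Φ : Matrix (Fin m) (Fin m) ℚ) (hΦ1 : (Φ - 1).det ≠ 0)
    (k : ℕ) (hk : 0 < k)
    (hrel : ∀ w w' : Fin m → ℤ,
      (Φ.mulVec (fun t => (((k : ℤ) * w t : ℤ) : ℚ)) = fun t => ((w' t : ℤ) : ℚ)) →
      ∀ i : Fin s, l (i + 1) ((k : ℤ) • w) = l i w')
    (hnet : ∀ v : Fin m → ℤ, ∀ u ∈ Subgroup.closure (Set.range fun i => l i v),
      ∀ r : ℕ, 0 < r → u ^ r = 1 → u = 1) :
    ∀ v : Fin m → ℤ, ∏ i : Fin s, l i v = 1 := by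
  intro v
  obtain ⟨n, hn, y, hy⟩ := Φ.exists_mulVec_eq_add_smul_of_det_sub_one_ne_zero (R := ℤ) hΦ1 v
  have hky : Φ *ᵥ (fun t => ((k * y t : ℤ) : ℚ)) =
      fun t => ((((k : ℤ) • y + ((k : ℤ) * n) • v) t : ℤ) : ℚ) := by
    have hcast : (fun t => ((k * y t : ℤ) : ℚ)) = (k : ℚ) • (algebraMap ℤ ℚ ∘ y) := by
      ext t; simp
    rw [hcast, mulVec_smul, hy]
    ext t; simp [mul_add, mul_assoc]
  have htorsion : IsOfFinOrder (∏ i, l i v) :=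
    isOfFinOrder_iff_zpow_eq_one.mpr ⟨k * n, by positivity, prod_zpow_eq_one_of_perm l hlmul
      (Equiv.addRight 1) (x := (k : ℤ) • y) fun i => hrel y _ hky i⟩
  obtain ⟨r, hr, hpow⟩ := isOfFinOrder_iff_pow_eq_one.mp htorsion
  exact hnet v _ (Subgroup.prod_mem _ fun i _ => Subgroup.subset_closure (Set.mem_range_self i))
    r hr hpow

/-- Let `λ_1, …, λ_s : ℤ^m → ℂˣ` be group homomorphisms, indexed cyclically (so `λ_{s+1} = λ_1`,
which corresponds to the cyclic addition `i + 1` in `Fin s`), and let `Φ` be an `m×m` rational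
matrix not having `1` as an eigenvalue.  Suppose there is a positive integer `k` such that
`Φ·(k w) ∈ ℤ^m` and `λ_{i+1}(k w) = λ_i(Φ·(k w))` for all `w ∈ ℤ^m` and all `i`.  If for every
`v ∈ ℤ^m` the subgroup of `ℂˣ` generated by `λ_1(v), …, λ_s(v)` contains no root of unity
other than `1`, then `λ_1(v)·λ_2(v)⋯λ_s(v) = 1` for every `v ∈ ℤ^m`. -/
theorem prod_eigenvalue_homs_eq_one {s m : ℕ} [NeZero s] (hm : 0 < m)
    (l : Fin s → (Fin m → ℤ) → ℂˣ)
    (hl1 : ∀ i, l i 0 = 1) (hlmul : ∀ i v w, l i (v + w) = l i v * l i w)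
    (Φ : Matrix (Fin m) (Fin m) ℚ) (hΦ1 : (Φ - 1).det ≠ 0)
    (k : ℕ) (hk : 0 < k)
    (hΦint : ∀ w : Fin m → ℤ, ∃ w' : Fin m → ℤ,
      Φ.mulVec (fun t => (((k : ℤ) * w t : ℤ) : ℚ)) = fun t => ((w' t : ℤ) : ℚ))
    (hrel : ∀ w w' : Fin m → ℤ,
      (Φ.mulVec (fun t => (((k : ℤ) * w t : ℤ) : ℚ)) = fun t => ((w' t : ℤ) : ℚ)) →
      ∀ i : Fin s, l (i + 1) ((k : ℤ) • w) = l i w')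
    (hnet : ∀ v : Fin m → ℤ, ∀ u ∈ Subgroup.closure (Set.range fun i => l i v),
      ∀ r : ℕ, 0 < r → u ^ r = 1 → u = 1) :
    ∀ v : Fin m → ℤ, ∏ i : Fin s, l i v = 1 :=
  prod_eigenvalue_homs_eq_one_general l hlmul Φ hΦ1 k hk hrel hnet
end

section
/- Let k and c be positive integers, let n_1, …, n_c be positive integers, and for each i = 1, …, c let ρ_i : ℤ^k → GL_{n_i}(ℤ) be a group homomorphism. Then there exists a positive integer n such that for every v ∈ ℤ^k the multiplicative subgroup of ℂˣ generated by the union, over i = 1,…,c, of the sets of complex eigenvalues of ρ_i(n·v) contains no root of unity other than 1. -/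
/-!
Since `ρ i (N • v) = ρ i v ^ N`, every element of the group generated by the eigenvalues of the
`ρ i (N • v)` is the `N`-th power of an element `η` of the group generated by the eigenvalues of
the `ρ i v`. All of these lie in the field `K` generated over `ℚ` by the roots of
`∏ i, charpoly (ρ i v)`, whose degree is at most `n ^ n` with `n = ∑ i, nn i`, independently
of `v`. A root of unity of order `m` in `K` has `φ m ≤ [K : ℚ]`, and `m ≤ 2 * φ m ^ 2`, so
`m ∣ N := (2 * (n ^ n) ^ 2)!` and therefore `η ^ N = 1`.
-/

open Polynomial Module
open scoped Nat

namespace Nat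

theorem prime_pow_le_mul_totient_sq {p a C : ℕ} (hp : p.Prime) (ha : 0 < a)
    (hpC : p ≤ C * (p - 1) ^ 2) : p ^ a ≤ C * φ (p ^ a) ^ 2 := by
  rw [totient_prime_pow hp ha]
  calc p ^ a = p ^ (a - 1) * p := by rw [← pow_succ, Nat.sub_add_cancel ha]
    _ ≤ (p ^ (a - 1)) ^ 2 * (C * (p - 1) ^ 2) :=
        Nat.mul_le_mul (Nat.le_self_pow two_ne_zero _) hpC
    _ = C * (p ^ (a - 1) * (p - 1)) ^ 2 := by ring

theorem le_totient_sq_of_odd_and_le_two_mul_totient_sq (m : ℕ) :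
    (Odd m → m ≤ φ m ^ 2) ∧ m ≤ 2 * φ m ^ 2 := by
  induction m using Nat.recOnPosPrimePosCoprime with
  | zero => simp
  | one => simp
  | prime_pow p a hp ha =>
    obtain ⟨q, rfl⟩ : ∃ q, p = q + 1 := ⟨p - 1, (Nat.sub_add_cancel hp.one_le).symm⟩
    have hq : 1 ≤ q := Nat.le_of_lt_succ hp.two_le
    refine ⟨fun hodd => ?_,
      prime_pow_le_mul_totient_sq hp ha (by rw [Nat.add_sub_cancel]; nlinarith)⟩
    have hq2 : 2 ≤ q := by
      rcases hp.eq_two_or_odd' with h | h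
      · exact absurd hodd (by simpa [h] using Nat.even_pow.mpr ⟨even_two, ha.ne'⟩)
      · obtain ⟨b, hb⟩ := h; omega
    simpa using
      prime_pow_le_mul_totient_sq (C := 1) hp ha (by rw [Nat.add_sub_cancel]; nlinarith)
  | coprime a b _ _ hab iha ihb =>
    rw [totient_mul hab]
    have of_odd_left : ∀ {x y}, x ≤ φ x ^ 2 → y ≤ 2 * φ y ^ 2 →
        x * y ≤ 2 * (φ x * φ y) ^ 2 := fun hx hy =>
      (Nat.mul_le_mul hx hy).trans_eq (by ring)
    refine ⟨fun hodd => ?_, ?_⟩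
    · obtain ⟨hoa, hob⟩ := Nat.odd_mul.mp hodd
      exact (Nat.mul_le_mul (iha.1 hoa) (ihb.1 hob)).trans_eq (mul_pow ..).symm
    · rcases Nat.even_or_odd a with hea | hoa
      · have hob : Odd b := (hab.coprime_dvd_left hea.two_dvd).odd_of_left
        rw [mul_comm a, mul_comm (φ a)]
        exact of_odd_left (ihb.1 hob) iha.2
      · exact of_odd_left (iha.1 hoa) ihb.2

theorem le_two_mul_totient_sq (m : ℕ) : m ≤ 2 * φ m ^ 2 :=
  (le_totient_sq_of_odd_and_le_two_mul_totient_sq m).2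

end Nat

theorem totient_orderOf_le_finrank {K : Type*} [Field K] [CharZero K] [FiniteDimensional ℚ K]
    (ζ : Kˣ) : φ (orderOf ζ) ≤ finrank ℚ K := by
  obtain h | h := (orderOf ζ).eq_zero_or_pos
  · simp [h]
  have hζ : IsPrimitiveRoot (ζ : K) (orderOf ζ) :=
    IsPrimitiveRoot.coe_units_iff.mpr (IsPrimitiveRoot.orderOf ζ)
  calc φ (orderOf ζ) = (minpoly ℚ (ζ : K)).natDegree := by
        rw [← cyclotomic_eq_minpoly_rat hζ h, natDegree_cyclotomic]
    _ ≤ finrank ℚ K := minpoly.natDegree_le _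

theorem pow_factorial_eq_one_of_finrank_le {K : Type*} [Field K] [CharZero K]
    [FiniteDimensional ℚ K] {D : ℕ} (hD : finrank ℚ K ≤ D) {ζ : Kˣ} (hζ : IsOfFinOrder ζ) :
    ζ ^ (2 * D ^ 2)! = 1 := by
  refine orderOf_dvd_iff_pow_eq_one.mp (Nat.dvd_factorial hζ.orderOf_pos ?_)
  calc orderOf ζ ≤ 2 * φ (orderOf ζ) ^ 2 := Nat.le_two_mul_totient_sq _
    _ ≤ 2 * D ^ 2 := by gcongr; exact (totient_orderOf_le_finrank ζ).trans hD

namespace IntermediateField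

theorem finrank_adjoin_finset_le {F L : Type*} [Field F] [Field L]
    [Algebra F L] (d : ℕ) (s : Finset L)
    (hs : ∀ x ∈ s, IsIntegral F x ∧ (minpoly F x).natDegree ≤ d) :
    finrank F (adjoin F (s : Set L)) ≤ d ^ s.card := by
  classical
  induction s using Finset.induction_on with
  | empty =>
    rw [Finset.coe_empty, adjoin_empty, IntermediateField.finrank_bot, Finset.card_empty, pow_zero]
  | insert a s ha ih =>
    obtain ⟨ha_int, ha_deg⟩ := hs a (s.mem_insert_self a)
    rw [Finset.coe_insert, Set.insert_eq, adjoin_union, Finset.card_insert_of_notMem ha,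
      pow_succ']
    calc finrank F ↥(adjoin F ({a} : Set L) ⊔ adjoin F (s : Set L))
        ≤ finrank F (adjoin F ({a} : Set L)) * finrank F (adjoin F (s : Set L)) :=
          finrank_sup_le _ _
      _ ≤ d * d ^ s.card := by
          gcongr
          · exact (adjoin.finrank ha_int).trans_le ha_deg
          · exact ih fun x hx => hs x (Finset.mem_insert_of_mem hx)

theorem finrank_adjoin_rootSet_le {F L : Type*} [Field F] [Field L]
    [Algebra F L] (p : F[X]) : finrank F (adjoin F (p.rootSet L)) ≤ p.natDegree ^ p.natDegree := by
  classical
  have hcard : (p.aroots L).toFinset.card ≤ p.natDegree :=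
    (Multiset.toFinset_card_le _).trans ((card_roots' _).trans (natDegree_map_le))
  have hroots : ∀ x ∈ (p.aroots L).toFinset,
      IsIntegral F x ∧ (minpoly F x).natDegree ≤ p.natDegree := by
    intro x hx
    obtain ⟨hp, hpx⟩ := mem_aroots.mp (Multiset.mem_toFinset.mp hx)
    exact ⟨IsAlgebraic.isIntegral ⟨p, hp, hpx⟩,
      natDegree_le_natDegree (minpoly.degree_le_of_ne_zero F x hp hpx)⟩
  rw [rootSet_def]
  refine (finrank_adjoin_finset_le _ _ hroots).trans ?_
  obtain h | h := p.natDegree.eq_zero_or_pos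
  · rw [h] at hcard ⊢
    rw [Nat.le_zero.mp hcard]
  · exact Nat.pow_le_pow_right h hcard

instance finiteDimensional_adjoin_rootSet {F L : Type*} [Field F] [Field L]
    [Algebra F L] (p : F[X]) : FiniteDimensional F (adjoin F (p.rootSet L)) :=
  finiteDimensional_adjoin fun _ hx => (isAlgebraic_of_mem_rootSet hx).isIntegral

theorem mem_range_unitsMap_val {F E : Type*} [Field F] [Field E] [Algebra F E]
    (K : IntermediateField F E) {u : Eˣ} (hu : (u : E) ∈ K) :
    u ∈ (Units.map (K.val : K →* E)).range :=
  ⟨Units.mk0 ⟨u, hu⟩ fun h => u.ne_zero (congrArg Subtype.val h), Units.ext rfl⟩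

end IntermediateField

theorem Matrix.aeval_charpoly_eq_zero_of_mem_spectrum_map {R L n : Type*} [CommRing R] [Field L]
    [Algebra R L] [Fintype n] [DecidableEq n] (A : Matrix n n R) {z : L}
    (hz : z ∈ spectrum L (A.map (algebraMap R L))) : aeval z A.charpoly = 0 := by
  rwa [Matrix.mem_spectrum_iff_isRoot_charpoly, Matrix.charpoly_map, IsRoot,
    eval_map_algebraMap] at hz

theorem units_mem_spectrum_pow {𝕜 A : Type*} [Field 𝕜] [IsAlgClosed 𝕜] [Ring A] [Algebra 𝕜 A]
    (a : A) {N : ℕ} (hN : 0 < N) :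
    {u : 𝕜ˣ | (u : 𝕜) ∈ spectrum 𝕜 (a ^ N)} =
      (powMonoidHom N : 𝕜ˣ →* 𝕜ˣ) '' {u | (u : 𝕜) ∈ spectrum 𝕜 a} := by
  ext u
  simp only [Set.mem_ofPred_eq, spectrum.map_pow_of_pos a hN, Set.mem_image, powMonoidHom_apply]
  constructor
  · rintro ⟨z, hz, hzu⟩
    have hz0 : z ≠ 0 := by
      rintro rfl
      exact u.ne_zero (by rw [← hzu, zero_pow hN.ne'])
    exact ⟨Units.mk0 z hz0, hz, Units.ext hzu⟩
  · rintro ⟨w, hw, rfl⟩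
    exact ⟨w, hw, rfl⟩

theorem map_nsmul_eq_pow_of_map_add {A M : Type*} [AddMonoid A] [Monoid M] {f : A → M}
    (h0 : f 0 = 1) (hadd : ∀ a b, f (a + b) = f a * f b) (a : A) (m : ℕ) :
    f (m • a) = f a ^ m := by
  induction m with
  | zero => rw [zero_smul, h0, pow_zero]
  | succ m ih => rw [succ_nsmul, hadd, ih, pow_succ]

section IntegerMatrices

variable {ι : Type*} [Fintype ι] {n : ι → Type*} [∀ i, Fintype (n i)] [∀ i, DecidableEq (n i)]
  (A : (i : ι) → Matrix (n i) (n i) ℤ)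

theorem monic_prod_charpoly : (∏ i, (A i).charpoly).Monic :=
  monic_prod_of_monic _ _ fun i _ => (A i).charpoly_monic

theorem natDegree_map_prod_charpoly :
    ((∏ i, (A i).charpoly).map (algebraMap ℤ ℚ)).natDegree = ∑ i, Fintype.card (n i) := by
  rw [(monic_prod_charpoly A).natDegree_map,
    natDegree_prod_of_monic _ _ fun i _ => (A i).charpoly_monic]
  simp only [Matrix.charpoly_natDegree_eq_dim]

theorem mem_rootSet_map_prod_charpoly {i : ι} {z : ℂ}
    (hz : z ∈ spectrum ℂ ((A i).map (Int.cast : ℤ → ℂ))) :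
    z ∈ ((∏ j, (A j).charpoly).map (algebraMap ℤ ℚ)).rootSet ℂ := by
  rw [mem_rootSet_of_ne ((monic_prod_charpoly A).map _).ne_zero, aeval_map_algebraMap, map_prod]
  exact Finset.prod_eq_zero (Finset.mem_univ i)
    ((A i).aeval_charpoly_eq_zero_of_mem_spectrum_map hz)

end IntegerMatrices

theorem exists_power_net_general {k c : ℕ} (nn : Fin c → ℕ)
    (ρ : (i : Fin c) → (Fin k → ℤ) → Matrix (Fin (nn i)) (Fin (nn i)) ℤ)
    (hρ1 : ∀ i, ρ i 0 = 1) (hρmul : ∀ i v w, ρ i (v + w) = ρ i v * ρ i w) :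
    ∃ N : ℕ, 0 < N ∧ ∀ v : Fin k → ℤ,
      ∀ u ∈ Subgroup.closure (⋃ i : Fin c,
        {u : ℂˣ | (u : ℂ) ∈ spectrum ℂ ((ρ i ((N : ℤ) • v)).map (Int.cast : ℤ → ℂ))}),
      ∀ r : ℕ, 0 < r → u ^ r = 1 → u = 1 := by
  set n := ∑ i, nn i
  set N := (2 * (n ^ n) ^ 2)!
  have hN : 0 < N := Nat.factorial_pos _
  refine ⟨N, hN, fun v u hu r hr hur => ?_⟩
  set K := IntermediateField.adjoin ℚ
    (((∏ i, (ρ i v).charpoly).map (algebraMap ℤ ℚ)).rootSet ℂ)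
  have hK : finrank ℚ K ≤ n ^ n := by
    simpa only [natDegree_map_prod_charpoly, Fintype.card_fin] using
      IntermediateField.finrank_adjoin_rootSet_le (L := ℂ)
        ((∏ i, (ρ i v).charpoly).map (algebraMap ℤ ℚ))
  have hpow : ∀ i, (ρ i ((N : ℤ) • v)).map (Int.cast : ℤ → ℂ) =
      ((ρ i v).map (Int.cast : ℤ → ℂ)) ^ N := fun i => by
    rw [natCast_zsmul, map_nsmul_eq_pow_of_map_add (hρ1 i) (hρmul i)]
    exact Matrix.map_pow _ (Int.castRingHom ℂ) N
  obtain ⟨η, hη, rfl⟩ : u ∈ (Subgroup.closure (⋃ i : Fin c,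
      {w : ℂˣ | (w : ℂ) ∈ spectrum ℂ ((ρ i v).map (Int.cast : ℤ → ℂ))})).map (powMonoidHom N) := by
    rw [MonoidHom.map_closure, Set.image_iUnion]
    simp_rw [← units_mem_spectrum_pow _ hN, ← hpow]
    exact hu
  obtain ⟨κ, rfl⟩ := (Subgroup.closure_le _).mpr (Set.iUnion_subset fun i w hw =>
    K.mem_range_unitsMap_val (IntermediateField.subset_adjoin _ _
      (mem_rootSet_map_prod_charpoly (fun i => ρ i v) hw))) hη
  have hκ : IsOfFinOrder κ := by
    rw [← (Units.map_injective K.val.injective).isOfFinOrder_iff]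
    exact isOfFinOrder_iff_pow_eq_one.mpr ⟨N * r, by positivity, by rw [pow_mul]; exact hur⟩
  rw [powMonoidHom_apply, ← map_pow, pow_factorial_eq_one_of_finrank_le hK hκ, map_one]

/-- Given group homomorphisms `ρ_i : ℤ^k → GL_{n_i}(ℤ)` for `i = 1, …, c`, there is a positive
integer `N` such that for every `v ∈ ℤ^k` the subgroup of `ℂˣ` generated by the union of the
sets of complex eigenvalues of the matrices `ρ_i(N·v)` contains no root of unity other
than `1`. -/
theorem exists_power_net {k c : ℕ} (hk : 0 < k) (hc : 0 < c)
    (nn : Fin c → ℕ) (hnn : ∀ i, 0 < nn i)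
    (ρ : (i : Fin c) → (Fin k → ℤ) → Matrix (Fin (nn i)) (Fin (nn i)) ℤ)
    (hρ1 : ∀ i, ρ i 0 = 1) (hρmul : ∀ i v w, ρ i (v + w) = ρ i v * ρ i w)
    (hρunit : ∀ i v, IsUnit (ρ i v)) :
    ∃ N : ℕ, 0 < N ∧ ∀ v : Fin k → ℤ,
      ∀ u ∈ Subgroup.closure (⋃ i : Fin c,
        {u : ℂˣ | (u : ℂ) ∈ spectrum ℂ ((ρ i ((N : ℤ) • v)).map (Int.cast : ℤ → ℂ))}),
      ∀ r : ℕ, 0 < r → u ^ r = 1 → u = 1 :=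
  exists_power_net_general nn ρ hρ1 hρmul
end

section
/- Let G be a group, let φ be an automorphism of G, and let H be a normal subgroup of finite index in G with φ(H) ⊆ H. Let x_1, …, x_k ∈ G be a complete set of representatives of the cosets of H in G, where k = [G:H]. Then the cardinality of the set of φ-twisted conjugacy classes of G is at most the sum, over i = 1,…,k, of the cardinalities of the sets of (τ_{x_i}∘φ)|_H-twisted conjugacy classes of H, where τ_x : G → G denotes the inner automorphism g ↦ x g x⁻¹. In particular, R(φ) ≤ Σ_{i=1}^k R((τ_{x_i}∘φ)|_H) whenever the right-hand side is finite. -/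
/-!
Sending the class of `h ∈ H` for the twist `τ_{x_i} ∘ φ` to the `φ`-class of `h x_i` is well
defined, since `h ↦ g h x_i φ(g)⁻¹ x_i⁻¹` becomes `h x_i ↦ g (h x_i) φ(g)⁻¹` after multiplying by
`x_i` on the right. Every `a ∈ G` lies in some coset `x_i H = H x_i`, so `a = (a x_i⁻¹) x_i` is hit,
and the disjoint union of the twisted classes of `H` surjects onto the `φ`-twisted classes of `G`.
-/

open Cardinal

universe u v

def Equiv.sigmaOptionEquivSum {α : Type u} (β : Option α → Type v) :
    (Σ o, β o) ≃ β none ⊕ Σ a, β (some a) where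
  toFun
    | ⟨none, b⟩ => .inl b
    | ⟨some a, b⟩ => .inr ⟨a, b⟩
  invFun := Sum.elim (Sigma.mk none) (Sigma.map some fun _ => id)
  left_inv := by rintro ⟨_ | a, b⟩ <;> rfl
  right_inv := by rintro (b | ⟨a, b⟩) <;> rfl

namespace Cardinal

theorem sum_option {α : Type u} (f : Option α → Cardinal.{v}) :
    sum f = lift.{u} (f none) + sum fun a => f (some a) := by
  refine (Equiv.sigmaOptionEquivSum fun o => (f o).out).cardinal_eq.trans ?_
  simp [congr_fun lift_umax.{v, u}]

theorem sum_comp_equiv {α β : Type u} (e : α ≃ β) (f : β → Cardinal.{v}) :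
    sum (f ∘ e) = sum f :=
  mk_congr <| Equiv.sigmaCongrLeft (β := fun b => (f b).out) e

theorem sum_eq_sum_univ {ι : Type u} [Fintype ι] (f : ι → Cardinal.{v}) :
    sum f = ∑ i, lift.{u} (f i) := by
  refine Fintype.induction_empty_option
    (P := fun ι _ => ∀ f : ι → Cardinal.{v}, sum f = ∑ i, lift.{u} (f i)) ?_ ?_ ?_ ι f
  · intro α β _ e ih f
    let := Fintype.ofEquiv β e.symm
    rw [← sum_comp_equiv e, ih, ← e.sum_comp]
    rfl
  · intro f
    exact mk_eq_zero _
  · intro α _ ih f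
    rw [sum_option, ih, Fintype.sum_option]

end Cardinal

section TwistedConj

variable {G : Type*} [Group G]

def TwistedConj (φ : G →* G) (a b : G) : Prop :=
  ∃ g : G, a = g * b * (φ g)⁻¹

/-- `ψ`-twisted conjugacy of elements of `H` by elements of `H`, with the equation read in `G`. -/
def TwistedConjIn (H : Subgroup G) (ψ : G →* G) (a b : H) : Prop :=
  ∃ g : H, (a : G) = g * b * (ψ g)⁻¹

variable (φ : G →* G) (H : Subgroup G)

theorem TwistedConjIn.twistedConj_mul_right {x : G} {a b : H}
    (hab : TwistedConjIn H ((MulAut.conj x).toMonoidHom.comp φ) a b) :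
    TwistedConj φ (a * x) (b * x) := by
  obtain ⟨g, hg⟩ := hab
  refine ⟨g, ?_⟩
  simp only [hg, MonoidHom.comp_apply, MulEquiv.coe_toMonoidHom, MulAut.conj_apply]
  group

def twistedClassOfCoset {ι : Type*} (x : ι → G) :
    (Σ i, Quot (TwistedConjIn H ((MulAut.conj (x i)).toMonoidHom.comp φ))) →
      Quot (TwistedConj φ) :=
  fun p => Quot.lift (fun h : H => Quot.mk _ (h * x p.1))
    (fun _ _ hab => Quot.sound hab.twistedConj_mul_right) p.2

theorem twistedClassOfCoset_surjective [H.Normal] {ι : Type*} (x : ι → G)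
    (hx : ∀ g : G, ∃ i, (x i)⁻¹ * g ∈ H) : Function.Surjective (twistedClassOfCoset φ H x) := by
  rintro ⟨a⟩
  obtain ⟨i, hi⟩ := hx a
  have ha : a * (x i)⁻¹ ∈ H := ‹H.Normal›.mem_comm hi
  exact ⟨⟨i, Quot.mk _ ⟨a * (x i)⁻¹, ha⟩⟩, congrArg (Quot.mk _) (inv_mul_cancel_right a (x i))⟩

end TwistedConj

theorem reidemeister_le_sum_over_cosets_general {G : Type*} [Group G]
    (φ : G ≃* G) (H : Subgroup G) [H.Normal]
    (k : ℕ) (x : Fin k → G)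
    (hrep : ∀ g : G, ∃! i : Fin k, (x i)⁻¹ * g ∈ H) :
    Cardinal.mk (Quot fun a b : G => ∃ g : G, a = g * b * (φ g)⁻¹) ≤
      ∑ i : Fin k, Cardinal.mk (Quot fun a b : H =>
        ∃ g : H, (a : G) = (g : G) * (b : G) * (x i * φ (g : G) * (x i)⁻¹)⁻¹) := by
  have hsurj := twistedClassOfCoset_surjective φ.toMonoidHom H x fun g => (hrep g).exists
  calc Cardinal.mk (Quot (TwistedConj φ.toMonoidHom))
      ≤ Cardinal.mk (Σ i, Quot (TwistedConjIn H ((MulAut.conj (x i)).toMonoidHom.comp φ))) :=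
        mk_le_of_surjective hsurj
    _ = _ := by simp only [mk_sigma, sum_eq_sum_univ, lift_uzero]; rfl

/-- Let `G` be a group, `φ` an automorphism of `G`, `H` a normal subgroup of finite index with
`φ(H) ⊆ H`, and `x_1, …, x_k` a complete set of coset representatives of `H` in `G`, where
`k = [G:H]`.  Then the number of `φ`-twisted conjugacy classes of `G` is at most the sum over
`i` of the numbers of `(τ_{x_i}∘φ)|_H`-twisted conjugacy classes of `H` (as cardinals, which
in particular gives `R(φ) ≤ Σ_i R((τ_{x_i}∘φ)|_H)` whenever the right-hand side is finite). -/
theorem reidemeister_le_sum_over_cosets {G : Type*} [Group G]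
    (φ : G ≃* G) (H : Subgroup G) [H.Normal] [H.FiniteIndex]
    (hφH : ∀ h ∈ H, φ h ∈ H)
    (k : ℕ) (hk : k = H.index) (x : Fin k → G)
    (hrep : ∀ g : G, ∃! i : Fin k, (x i)⁻¹ * g ∈ H) :
    Cardinal.mk (Quot fun a b : G => ∃ g : G, a = g * b * (φ g)⁻¹) ≤
      ∑ i : Fin k, Cardinal.mk (Quot fun a b : H =>
        ∃ g : H, (a : G) = (g : G) * (b : G) * (x i * φ (g : G) * (x i)⁻¹)⁻¹) :=
  reidemeister_le_sum_over_cosets_general φ H k x hrep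
end

section
/- Let k_1, …, k_n be positive integers and identify ℝ^{k_1+⋯+k_n} with ℝ^{k_1}×⋯×ℝ^{k_n}, writing points as x = (x_1,…,x_n) with x_i ∈ ℝ^{k_i}. Let F be the self-map of ℝ^{k_1}×⋯×ℝ^{k_n} whose i-th component is F(x)_i = B_i x_i + p_i(x_1,…,x_{i−1}), where each B_i is a k_i×k_i real matrix and each p_i : ℝ^{k_1+⋯+k_{i−1}} → ℝ^{k_i} is a polynomial map (p_1 being a constant). If det(I − B_j) = 0 for some j ∈ {1,…,n}, then the set of fixed points of F is either empty or uncountable. -/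
/-!
Let `x₀` be a fixed point and `j` the largest index with `det (1 - B j) = 0`; pick `v ≠ 0` with
`B j v = v`. For every scalar `t`, the point `x₀ + t v` (with `t v` placed in block `j`) satisfies
the fixed-point equations of all blocks `i ≤ j`, since those only see coordinates `≤ j`. The
blocks `i > j` can then be solved one after the other, `x i = (1 - B i)⁻¹ p i x`, because
`p i` only sees earlier blocks. The resulting fixed points are pairwise distinct in block `j`,
so the field injects into the fixed-point set.
-/

/-- `f` is a polynomial map from `ℝ^{k_1}×⋯×ℝ^{k_n}` to `ℝ^l`: each of its `l` component
functions is given by a polynomial in the standard coordinates. -/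
def IsPolyMap {n : ℕ} {k : Fin n → ℕ} {l : ℕ}
    (f : ((i : Fin n) → Fin (k i) → ℝ) → (Fin l → ℝ)) : Prop :=
  ∀ t : Fin l, ∃ q : MvPolynomial ((i : Fin n) × Fin (k i)) ℝ,
    ∀ x, f x t = MvPolynomial.eval (fun s => x s.1 s.2) q

open Function Matrix

section DependsOnLT

variable {n : ℕ} {E : Fin n → Type*} (G : ((i : Fin n) → E i) → (i : Fin n) → E i)

theorem iterate_apply_eq_of_dependsOn_lt
    (hG : ∀ x y i, (∀ j < i, x j = y j) → G x i = G y i) (m : ℕ) (x y : (i : Fin n) → E i)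
    (i : Fin n) (hi : (i : ℕ) < m) : G^[m] x i = G^[m] y i := by
  induction m generalizing i with
  | zero => omega
  | succ m ih =>
    rw [iterate_succ_apply', iterate_succ_apply']
    exact hG _ _ i fun j hj => ih j (by rw [Fin.lt_def] at hj; omega)

theorem isFixedPt_iterate_of_dependsOn_lt
    (hG : ∀ x y i, (∀ j < i, x j = y j) → G x i = G y i) (x : (i : Fin n) → E i) :
    IsFixedPt G (G^[n] x) := by
  funext i
  rw [← iterate_succ_apply' G n x, iterate_succ_apply]
  exact iterate_apply_eq_of_dependsOn_lt G hG n (G x) x i i.isLt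

end DependsOnLT

section Triangular

variable {K : Type*} [Field K] {n : ℕ} {k : Fin n → ℕ}
  (B : (i : Fin n) → Matrix (Fin (k i)) (Fin (k i)) K)
  (p : (i : Fin n) → ((j : Fin n) → Fin (k j) → K) → Fin (k i) → K)

def triangularMap (x : (i : Fin n) → Fin (k i) → K) : (i : Fin n) → Fin (k i) → K :=
  fun i => B i *ᵥ x i + p i x

variable {B p}

theorem exists_isFixedPt_triangularMap_eqOn_le
    (htri : ∀ (i : Fin n) x y, (∀ j, j < i → x j = y j) → p i x = p i y) {j : Fin n}
    (hunit : ∀ i, j < i → IsUnit (1 - B i).det) {y : (i : Fin n) → Fin (k i) → K}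
    (hy : ∀ i ≤ j, triangularMap B p y i = y i) :
    ∃ x, IsFixedPt (triangularMap B p) x ∧ ∀ i ≤ j, x i = y i := by
  let G : ((i : Fin n) → Fin (k i) → K) → (i : Fin n) → Fin (k i) → K :=
    fun z i => if i ≤ j then y i else (1 - B i)⁻¹ *ᵥ p i z
  have hG : ∀ z z' i, (∀ i' < i, z i' = z' i') → G z i = G z' i := by
    intro z z' i h
    simp only [G, htri i z z' h]
  set x := G^[n] y
  have hx : G x = x := isFixedPt_iterate_of_dependsOn_lt G hG y
  have hle : ∀ i ≤ j, x i = y i := fun i hi => by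
    rw [← hx]
    exact if_pos hi
  refine ⟨x, funext fun i => ?_, hle⟩
  by_cases hi : i ≤ j
  · have hp : p i x = p i y := htri i x y fun i' hi' => hle i' (hi'.le.trans hi)
    rw [triangularMap, hle i hi, hp]
    exact hy i hi
  · have hxi : (1 - B i) *ᵥ G x i = p i x := by
      simp only [G, if_neg hi, mulVec_mulVec, mul_nonsing_inv _ (hunit i (not_le.mp hi)),
        one_mulVec]
    rw [hx, sub_mulVec, one_mulVec] at hxi
    rw [triangularMap, ← hxi, add_sub_cancel]

theorem triangularMap_add_eqOn_le
    (htri : ∀ (i : Fin n) x y, (∀ j, j < i → x j = y j) → p i x = p i y)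
    {x₀ : (i : Fin n) → Fin (k i) → K} (hx₀ : IsFixedPt (triangularMap B p) x₀) {j : Fin n}
    {w : (i : Fin n) → Fin (k i) → K} (hw₀ : ∀ i < j, w i = 0) (hw : B j *ᵥ w j = w j) :
    ∀ i ≤ j, triangularMap B p (x₀ + w) i = (x₀ + w) i := by
  intro i hi
  have hp : p i (x₀ + w) = p i x₀ := htri i _ _ fun i' hi' => by
    rw [Pi.add_apply, hw₀ i' (hi'.trans_le hi), add_zero]
  have hBw : B i *ᵥ w i = w i := by
    rcases hi.lt_or_eq with hlt | rfl
    · rw [hw₀ i hlt, mulVec_zero]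
    · exact hw
  rw [triangularMap, hp, Pi.add_apply, mulVec_add, hBw, add_right_comm]
  exact congrArg (· + _) (congrFun hx₀ i)

theorem exists_injective_isFixedPt_triangularMap
    (htri : ∀ (i : Fin n) x y, (∀ j, j < i → x j = y j) → p i x = p i y)
    (hdet : ∃ j, (1 - B j).det = 0) {x₀ : (i : Fin n) → Fin (k i) → K}
    (hx₀ : IsFixedPt (triangularMap B p) x₀) :
    ∃ g : K → (i : Fin n) → Fin (k i) → K,
      Injective g ∧ ∀ t, IsFixedPt (triangularMap B p) (g t) := by
  classical
  obtain ⟨j₀, hj₀⟩ := hdet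
  obtain ⟨j, hj, hmax⟩ := (Finset.univ.filter fun j => (1 - B j).det = 0).exists_max_image id
    ⟨j₀, by simpa using hj₀⟩
  rw [Finset.mem_filter] at hj
  have hunit : ∀ i, j < i → IsUnit (1 - B i).det := fun i hi =>
    isUnit_iff_ne_zero.mpr fun h => (hmax i (by simpa using h)).not_gt hi
  obtain ⟨v, hv0, hv⟩ := exists_mulVec_eq_zero_iff.mpr hj.2
  have hBv : B j *ᵥ v = v := by
    rw [sub_mulVec, one_mulVec, sub_eq_zero] at hv
    exact hv.symm
  let w : K → (i : Fin n) → Fin (k i) → K := fun t => Pi.single j (t • v)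
  have hw₀ : ∀ t, ∀ i < j, w t i = 0 := fun t i hi => Pi.single_eq_of_ne hi.ne _
  have hw : ∀ t, B j *ᵥ w t j = w t j := fun t => by
    simp only [w, Pi.single_eq_same, mulVec_smul, hBv]
  choose g hg hgj using fun t => exists_isFixedPt_triangularMap_eqOn_le htri hunit
    (triangularMap_add_eqOn_le htri hx₀ (hw₀ t) (hw t))
  refine ⟨g, fun t t' h => smul_left_injective K hv0 ?_, hg⟩
  have hgtj := congrFun h j
  rw [hgj t j le_rfl, hgj t' j le_rfl] at hgtj
  simpa [w] using hgtj

end Triangular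

theorem fixedPoints_empty_or_uncountable_of_triangular_general {n : ℕ}
    (k : Fin n → ℕ)
    (B : (i : Fin n) → Matrix (Fin (k i)) (Fin (k i)) ℝ)
    (p : (i : Fin n) → ((j : Fin n) → Fin (k j) → ℝ) → (Fin (k i) → ℝ))
    (htri : ∀ (i : Fin n) x y, (∀ j, j < i → x j = y j) → p i x = p i y)
    (F : ((j : Fin n) → Fin (k j) → ℝ) → ((j : Fin n) → Fin (k j) → ℝ))
    (hF : ∀ x i, F x i = (B i).mulVec (x i) + p i x)
    (hdet : ∃ j, (1 - B j).det = 0) :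
    {x | F x = x} = ∅ ∨ ¬ {x | F x = x}.Countable := by
  obtain rfl : F = triangularMap B p := funext fun x => funext (hF x)
  rcases Set.eq_empty_or_nonempty {x | triangularMap B p x = x} with h | ⟨x₀, hx₀⟩
  · exact Or.inl h
  obtain ⟨g, hg, hfix⟩ := exists_injective_isFixedPt_triangularMap htri hdet hx₀
  exact Or.inr fun hC => Set.not_countable_univ ((hC.preimage hg).mono fun t _ => hfix t)

/-- Let `F` be the self-map of `ℝ^{k_1}×⋯×ℝ^{k_n}` with components
`F(x)_i = B_i x_i + p_i(x_1,…,x_{i−1})`, where the `B_i` are real matrices and the `p_i` are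
polynomial maps depending only on the coordinates of index `< i` (so `p_1` is constant).
If `det(I − B_j) = 0` for some `j`, then the fixed point set of `F` is empty or uncountable
(i.e. admits no injection into `ℕ`). -/
theorem fixedPoints_empty_or_uncountable_of_triangular {n : ℕ} (hn : 0 < n)
    (k : Fin n → ℕ) (hk : ∀ i, 0 < k i)
    (B : (i : Fin n) → Matrix (Fin (k i)) (Fin (k i)) ℝ)
    (p : (i : Fin n) → ((j : Fin n) → Fin (k j) → ℝ) → (Fin (k i) → ℝ))
    (hpoly : ∀ i, IsPolyMap (p i))
    (htri : ∀ (i : Fin n) x y, (∀ j, j < i → x j = y j) → p i x = p i y)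
    (F : ((j : Fin n) → Fin (k j) → ℝ) → ((j : Fin n) → Fin (k j) → ℝ))
    (hF : ∀ x i, F x i = (B i).mulVec (x i) + p i x)
    (hdet : ∃ j, (1 - B j).det = 0) :
    {x | F x = x} = ∅ ∨ ¬ {x | F x = x}.Countable :=
  fixedPoints_empty_or_uncountable_of_triangular_general k B p htri F hF hdet
end

section
/- Let Π be a group with a chain of subgroups 1 = Π_{n+1} ≤ Π_n ≤ ⋯ ≤ Π_1 ≤ Π, each Π_i normal in Π, such that Π/Π_1 is finite and each quotient Π_i/Π_{i+1} is free abelian of rank k_i, identified with ℤ^{k_i} via a fixed isomorphism j_i. Set K_i = k_1+⋯+k_i (with K_0 = 0) and h = K_n; identify ℝ^h with ℝ^{k_1}×⋯×ℝ^{k_n}, writing points as x = (x_1,…,x_n) with x_i ∈ ℝ^{k_i}. Let λ_i : Π → GL_{k_i}(ℤ) denote the action of Π by conjugation on Π_i/Π_{i+1} ≅ ℤ^{k_i}. Let ρ : Π → P(ℝ^h) be a group homomorphism into the group of polynomial diffeomorphisms of ℝ^h such that: (1) for every γ ∈ Π there exist polynomial maps q_i : ℝ^{K_{i−1}} → ℝ^{k_i}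 with ρ(γ)(x_1,…,x_n) = (λ_1(γ)x_1 + q_1, λ_2(γ)x_2 + q_2(x_1), …, λ_n(γ)x_n + q_n(x_1,…,x_{n−1})); and (2) if moreover γ ∈ Π_i and j_i(γΠ_{i+1}) = z ∈ ℤ^{k_i}, then ρ(γ)(x_1,…,x_n) = (x_1, …, x_{i−1}, x_i + z, λ_{i+1}(γ)x_{i+1} + q_{i+1}(x_1,…,x_i), …, λ_n(γ)x_n + q_n(x_1,…,x_{n−1})). Let φ : Π → Π be an endomorphism with φ(Π_i) ⊆ Π_i for every i ∈ {1,…,n}, and let G_i be the k_i×k_i integer matrix representing the endomorphism induced by φ on Π_i/Π_{i+1} ≅ ℤ^{k_i}. If p : ℝ^h → ℝ^h is a polynomial map satisfying p∘ρ(γ) = ρ(φ(γ))∘p for every γ ∈ Π, then for every i ∈ {1,…,n} there exists a polynomial map p_i : ℝ^{K_{i−1}} → ℝ^{k_i} (a constant when i = 1) such that the i-th component of p satisfies p(x)_i = G_i x_i + p_i(x_1,…,x_{i−1}) for every x ∈ ℝ^h. -/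
/-!
Fix a block `i`. An element `a ∈ Π_j` acts by a `ρ(a)` that fixes the blocks before `j` and
translates block `j` by `j_j(a)`. Hence, once `p(x)_i` is known not to depend on the blocks after
`j`, equivariance shows that translating block `j` of `x` by an integer vector `z = j_j(a)`
changes `p(x)_i` exactly as `ρ(φ a)` changes `p(x)_i`: not at all if `j > i`, and by `G_i z` if
`j = i`. A polynomial that is `1`-periodic in one variable does not depend on it, so by downward
induction on `j` the component `p(x)_i` does not depend on the blocks after `i`, and
`p(x)_i - G_i x_i` does not depend on block `i` either.
-/

open Function

/-- `f` depends only on the coordinate blocks of index `< i`. -/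
def DependsOnlyBelow {n : ℕ} {k : Fin n → ℕ} {l : ℕ} (i : Fin n)
    (f : ((j : Fin n) → Fin (k j) → ℝ) → (Fin l → ℝ)) : Prop :=
  ∀ x y, (∀ j, j < i → x j = y j) → f x = f y

theorem Polynomial.eval_eq_of_eval_add_one_eq {R : Type*} [CommRing R] [IsDomain R] [CharZero R]
    (g : Polynomial R) (hg : ∀ t, g.eval (t + 1) = g.eval t) (a b : R) :
    g.eval a = g.eval b := by
  have hnat : ∀ m : ℕ, g.eval (m : R) = g.eval 0 := by
    intro m
    induction m with
    | zero => simp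
    | succ m ih => rw [Nat.cast_succ, hg, ih]
  have hconst : g = Polynomial.C (g.eval 0) := by
    refine sub_eq_zero.mp (Polynomial.eq_zero_of_infinite_isRoot _ ?_)
    refine Set.Infinite.mono ?_ (Set.infinite_range_of_injective Nat.cast_injective)
    rintro _ ⟨m, rfl⟩
    simp [hnat]
  rw [hconst]
  simp

theorem MvPolynomial.eval_update_eq_of_eval_update_add_one_eq {R σ : Type*} [CommRing R]
    [IsDomain R] [CharZero R] [DecidableEq σ] (q : MvPolynomial σ R) (s : σ)
    (hq : ∀ y, eval (update y s (y s + 1)) q = eval y q) (y : σ → R) (c : R) :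
    eval (update y s c) q = eval y q := by
  set F : σ → Polynomial R := update (fun s => Polynomial.C (y s)) s Polynomial.X
  set line := aeval F q
  have hline : ∀ t, line.eval t = eval (update y s t) q := by
    intro t
    have hF : (fun s' => Polynomial.aeval t (F s')) = update y s t := by
      funext s'
      rcases eq_or_ne s' s with rfl | hs
      · simp [F]
      · simp [F, update_of_ne hs]
    rw [← Polynomial.coe_aeval_eq_eval, comp_aeval_apply, hF]
    rfl
  have hper : ∀ t, line.eval (t + 1) = line.eval t := by
    intro t
    simpa [hline] using hq (update y s t)
  simpa [hline] using line.eval_eq_of_eval_add_one_eq hper c (y s)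

theorem Function.apply_eq_of_update_invariant {ι γ : Type*} {β : ι → Type*} [DecidableEq ι]
    (f : ((i : ι) → β i) → γ) (S : Finset ι) (hS : ∀ i ∈ S, ∀ x v, f (update x i v) = f x)
    (x y : (i : ι) → β i) (hxy : ∀ i ∉ S, x i = y i) : f x = f y := by
  induction S using Finset.induction_on generalizing x with
  | empty => rw [funext fun i => hxy i (Finset.notMem_empty i)]
  | @insert a S _ ih =>
    rw [← hS a (Finset.mem_insert_self a S) x (y a)]
    refine ih (fun i hi => hS i (Finset.mem_insert_of_mem hi)) _ fun i hi => ?_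
    rcases eq_or_ne i a with rfl | hia
    · simp
    · simpa [update_of_ne hia, hia, hi] using hxy i

theorem Sigma.uncurry_update_update {α γ : Type*} {β : α → Type*} [DecidableEq α]
    [∀ a, DecidableEq (β a)] (x : (a : α) → β a → γ) (a : α) (b : β a) (u : γ) :
    Sigma.uncurry (update x a (update (x a) b u)) = update (Sigma.uncurry x) ⟨a, b⟩ u := by
  rw [← Sigma.uncurry_curry (update (Sigma.uncurry x) ⟨a, b⟩ u), Sigma.curry_update]
  rfl

section

variable {n : ℕ} {k : Fin n → ℕ} {l : ℕ}

theorem IsPolyMap.apply_update_update_eq_of_intPeriodic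
    {f : ((i : Fin n) → Fin (k i) → ℝ) → Fin l → ℝ} (hf : IsPolyMap f) (j : Fin n)
    (hper : ∀ x (z : Fin (k j) → ℤ), f (update x j (x j + fun c => (z c : ℝ))) = f x)
    (c : Fin (k j)) (x : (i : Fin n) → Fin (k i) → ℝ) (u : ℝ) :
    f (update x j (update (x j) c u)) = f x := by
  funext t
  obtain ⟨q, hq⟩ := hf t
  rw [hq, hq]
  change MvPolynomial.eval (Sigma.uncurry (update x j (update (x j) c u))) q
    = MvPolynomial.eval (Sigma.uncurry x) q
  rw [Sigma.uncurry_update_update]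
  refine q.eval_update_eq_of_eval_update_add_one_eq _ (fun y => ?_) _ u
  let X : (i : Fin n) → Fin (k i) → ℝ := fun i c => y ⟨i, c⟩
  have hunit : (X j + fun c' => ((Pi.single c 1 : Fin (k j) → ℤ) c' : ℝ))
      = update (X j) c (X j c + 1) := by
    funext c'
    rcases eq_or_ne c' c with rfl | hc
    · simp
    · simp [Pi.single_eq_of_ne hc, update_of_ne hc]
  have h := congrFun (hper X (Pi.single c 1)) t
  rw [hq, hq, hunit] at h
  change MvPolynomial.eval (Sigma.uncurry (update X j (update (X j) c (X j c + 1)))) q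
    = MvPolynomial.eval (Sigma.uncurry X) q at h
  rwa [Sigma.uncurry_update_update] at h

theorem IsPolyMap.apply_update_eq_of_intPeriodic {f : ((i : Fin n) → Fin (k i) → ℝ) → Fin l → ℝ}
    (hf : IsPolyMap f) (j : Fin n)
    (hper : ∀ x (z : Fin (k j) → ℤ), f (update x j (x j + fun c => (z c : ℝ))) = f x)
    (x : (i : Fin n) → Fin (k i) → ℝ) (v : Fin (k j) → ℝ) : f (update x j v) = f x := by
  refine (Function.apply_eq_of_update_invariant (fun w => f (update x j w)) Finset.univ
    (fun c _ w u => ?_) v (x j) (by simp)).trans (by rw [update_eq_self])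
  simpa using hf.apply_update_update_eq_of_intPeriodic j hper c (update x j w) u

theorem IsPolyMap.sub {f g : ((i : Fin n) → Fin (k i) → ℝ) → Fin l → ℝ} (hf : IsPolyMap f)
    (hg : IsPolyMap g) : IsPolyMap (f - g) := by
  intro t
  obtain ⟨q, hq⟩ := hf t
  obtain ⟨r, hr⟩ := hg t
  exact ⟨q - r, fun x => by simp [hq, hr]⟩

theorem isPolyMap_mulVec_apply (i : Fin n) (M : Matrix (Fin l) (Fin (k i)) ℝ) :
    IsPolyMap fun x : (j : Fin n) → Fin (k j) → ℝ => M.mulVec (x i) := by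
  intro t
  refine ⟨∑ c, MvPolynomial.C (M t c) * MvPolynomial.X ⟨i, c⟩, fun x => ?_⟩
  simp [Matrix.mulVec, dotProduct]

theorem dependsOnlyBelow_of_update_invariant {f : ((j : Fin n) → Fin (k j) → ℝ) → Fin l → ℝ}
    {i : Fin n} (hf : ∀ j, i ≤ j → ∀ x v, f (update x j v) = f x) : DependsOnlyBelow i f :=
  fun x y hxy => Function.apply_eq_of_update_invariant f (Finset.univ.filter (i ≤ ·))
    (fun j hj => hf j (Finset.mem_filter.mp hj).2) x y fun j hj => hxy j (by simpa using hj)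

theorem Matrix.map_intCast_mulVec {m m' R : Type*} [Fintype m'] [Ring R] (M : Matrix m m' ℤ)
    (z : m' → ℤ) : (M.map (Int.cast : ℤ → R)).mulVec (fun c => (z c : R)) =
      fun t => (M.mulVec z t : R) :=
  funext fun t => ((Int.castRingHom R).map_mulVec M z t).symm

def TranslatesBlock (g : ((i : Fin n) → Fin (k i) → ℝ) → (i : Fin n) → Fin (k i) → ℝ)
    (j : Fin n) (z : Fin (k j) → ℤ) : Prop :=
  (∀ x t, t < j → g x t = x t) ∧ ∀ x, g x j = x j + fun c => (z c : ℝ)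

theorem TranslatesBlock.apply_eq_update_of_le
    {g : ((i : Fin n) → Fin (k i) → ℝ) → (i : Fin n) → Fin (k i) → ℝ} {j : Fin n}
    {z : Fin (k j) → ℤ} (hg : TranslatesBlock g j z) (x : (i : Fin n) → Fin (k i) → ℝ)
    {t : Fin n} (ht : t ≤ j) : g x t = update x j (x j + fun c => (z c : ℝ)) t := by
  rcases ht.lt_or_eq with ht | rfl
  · rw [update_of_ne ht.ne, hg.1 x t ht]
  · rw [update_self, hg.2 x]

theorem TranslatesBlock.apply_update_add_eq {β : Type*}
    {g : ((i : Fin n) → Fin (k i) → ℝ) → (i : Fin n) → Fin (k i) → ℝ} {j : Fin n}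
    {z : Fin (k j) → ℤ} (hg : TranslatesBlock g j z) {f : ((i : Fin n) → Fin (k i) → ℝ) → β}
    (hf : ∀ t, j < t → ∀ x v, f (update x t v) = f x) (x : (i : Fin n) → Fin (k i) → ℝ) :
    f (update x j (x j + fun c => (z c : ℝ))) = f (g x) :=
  Function.apply_eq_of_update_invariant f (Finset.univ.filter (j < ·))
    (fun t ht => hf t (Finset.mem_filter.mp ht).2) _ _ fun t ht =>
      (hg.apply_eq_update_of_le x (by simpa using ht)).symm

section CanonicalType

variable {G : Type*} [Group G] {P : Fin (n + 1) → Subgroup G}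
  [∀ i : Fin n, ((P i.succ).subgroupOf (P i.castSucc)).Normal]
  (e : (i : Fin n) →
    (↥(P i.castSucc) ⧸ (P i.succ).subgroupOf (P i.castSucc)) ≃* Multiplicative (Fin (k i) → ℤ))
  {ρ : G → ((j : Fin n) → Fin (k j) → ℝ) → (j : Fin n) → Fin (k j) → ℝ}
  {φ : G →* G} {p : ((j : Fin n) → Fin (k j) → ℝ) → (j : Fin n) → Fin (k j) → ℝ}

theorem exists_toAdd_apply_mk_eq (j : Fin n) (z : Fin (k j) → ℤ) :
    ∃ a : P j.castSucc, Multiplicative.toAdd (e j (QuotientGroup.mk a)) = z := by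
  obtain ⟨a, ha⟩ := QuotientGroup.mk_surjective ((e j).symm (Multiplicative.ofAdd z))
  exact ⟨a, by rw [ha, MulEquiv.apply_symm_apply, toAdd_ofAdd]⟩

theorem apply_update_eq_of_lt
    (hρ : ∀ j (a : P j.castSucc),
      TranslatesBlock (ρ a) j (Multiplicative.toAdd (e j (QuotientGroup.mk a))))
    (hφ : ∀ j : Fin n, ∀ γ ∈ P j.castSucc, φ γ ∈ P j.castSucc)
    (hp : ∀ γ : G, p ∘ ρ γ = ρ (φ γ) ∘ p) {i : Fin n} (hpi : IsPolyMap fun x => p x i)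
    (j : Fin n) (hij : i < j) :
    ∀ x (v : Fin (k j) → ℝ), p (update x j v) i = p x i := by
  induction j using WellFoundedGT.induction with
  | ind j ih =>
  refine hpi.apply_update_eq_of_intPeriodic j fun x z => ?_
  obtain ⟨a, rfl⟩ := exists_toAdd_apply_mk_eq e j z
  refine ((hρ j a).apply_update_add_eq (f := (p · i)) (fun t hjt => ih t hjt (hij.trans hjt))
    x).trans ?_
  rw [← comp_apply (f := p), hp]
  exact (hρ j ⟨φ a, hφ j a a.2⟩).1 (p x) i hij

theorem apply_update_add_eq_add_mulVec
    (hρ : ∀ j (a : P j.castSucc),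
      TranslatesBlock (ρ a) j (Multiplicative.toAdd (e j (QuotientGroup.mk a))))
    (hφ : ∀ j : Fin n, ∀ γ ∈ P j.castSucc, φ γ ∈ P j.castSucc)
    (hp : ∀ γ : G, p ∘ ρ γ = ρ (φ γ) ∘ p) {i : Fin n} {M : Matrix (Fin (k i)) (Fin (k i)) ℤ}
    (hM : ∀ a : P i.castSucc, Multiplicative.toAdd (e i (QuotientGroup.mk
        (⟨φ a, hφ i a a.2⟩ : P i.castSucc))) =
      M.mulVec (Multiplicative.toAdd (e i (QuotientGroup.mk a))))
    (hinv : ∀ j, i < j → ∀ x v, p (update x j v) i = p x i) (x : (j : Fin n) → Fin (k j) → ℝ)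
    (z : Fin (k i) → ℤ) :
    p (update x i (x i + fun c => (z c : ℝ))) i = p x i + fun t => (M.mulVec z t : ℝ) := by
  obtain ⟨a, rfl⟩ := exists_toAdd_apply_mk_eq e i z
  refine ((hρ i a).apply_update_add_eq (f := (p · i)) hinv x).trans ?_
  rw [← comp_apply (f := p), hp, comp_apply, (hρ i ⟨φ a, hφ i a a.2⟩).2, hM]

end CanonicalType

end

theorem canonical_type_homotopy_lift_form_general {G : Type*} [Group G] {n : ℕ}
    (P : Fin (n + 1) → Subgroup G)
    (k : Fin n → ℕ)
    [hsub : ∀ i : Fin n, ((P i.succ).subgroupOf (P i.castSucc)).Normal]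
    (e : (i : Fin n) →
      (↥(P i.castSucc) ⧸ (P i.succ).subgroupOf (P i.castSucc)) ≃*
        Multiplicative (Fin (k i) → ℤ))
    -- the conjugation action `λ_i : Π → GL_{k_i}(ℤ)` on `Π_i/Π_{i+1} ≅ ℤ^{k_i}`
    (lam : (i : Fin n) → G → Matrix (Fin (k i)) (Fin (k i)) ℤ)
    (ρ : G → (((j : Fin n) → Fin (k j) → ℝ) → ((j : Fin n) → Fin (k j) → ℝ)))
    -- condition (2): the special form of `ρ(γ)` for `γ ∈ Π_i` with `j_i(γΠ_{i+1}) = z`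
    (hρ2 : ∀ (i : Fin n) (γ : G) (hγ : γ ∈ P i.castSucc),
      (∀ x j, j < i → ρ γ x j = x j) ∧
      (∀ x, ρ γ x i = x i + fun t =>
        ((Multiplicative.toAdd (e i (QuotientGroup.mk (⟨γ, hγ⟩ : P i.castSucc)))) t : ℝ)) ∧
      ∃ q : (j : Fin n) → (((j' : Fin n) → Fin (k j') → ℝ) → (Fin (k j) → ℝ)),
        (∀ j, IsPolyMap (q j) ∧ DependsOnlyBelow j (q j)) ∧
        ∀ x j, i < j → ρ γ x j = ((lam j γ).map (Int.cast : ℤ → ℝ)).mulVec (x j) + q j x)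
    -- the endomorphism `φ` with `φ(Π_i) ⊆ Π_i`, inducing `Gmat i` on `Π_i/Π_{i+1} ≅ ℤ^{k_i}`
    (φ : G →* G) (hφ : ∀ i : Fin n, ∀ γ ∈ P i.castSucc, φ γ ∈ P i.castSucc)
    (Gmat : (i : Fin n) → Matrix (Fin (k i)) (Fin (k i)) ℤ)
    (hGmat : ∀ (i : Fin n) (x : P i.castSucc),
      Multiplicative.toAdd (e i (QuotientGroup.mk
        (⟨φ (x : G), hφ i (x : G) x.2⟩ : P i.castSucc))) =
        (Gmat i).mulVec (Multiplicative.toAdd (e i (QuotientGroup.mk x))))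
    -- `p` is a polynomial map satisfying `p ∘ ρ(γ) = ρ(φ(γ)) ∘ p`
    (p : ((j : Fin n) → Fin (k j) → ℝ) → ((j : Fin n) → Fin (k j) → ℝ))
    (hp_poly : ∀ i : Fin n, IsPolyMap (fun x => p x i))
    (hp : ∀ γ : G, p ∘ ρ γ = ρ (φ γ) ∘ p) :
    ∀ i : Fin n, ∃ pi : ((j : Fin n) → Fin (k j) → ℝ) → (Fin (k i) → ℝ),
      IsPolyMap pi ∧ DependsOnlyBelow i pi ∧
      ∀ x, p x i = ((Gmat i).map (Int.cast : ℤ → ℝ)).mulVec (x i) + pi x := by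
  intro i
  have hρ : ∀ j (a : P j.castSucc),
      TranslatesBlock (ρ a) j (Multiplicative.toAdd (e j (QuotientGroup.mk a))) :=
    fun j a => ⟨(hρ2 j a a.2).1, (hρ2 j a a.2).2.1⟩
  have habove := apply_update_eq_of_lt e hρ hφ hp (hp_poly i)
  have hF : IsPolyMap fun x => p x i - ((Gmat i).map (Int.cast : ℤ → ℝ)).mulVec (x i) :=
    (hp_poly i).sub (isPolyMap_mulVec_apply i _)
  refine ⟨_, hF, dependsOnlyBelow_of_update_invariant fun j hij => ?_, fun x => by simp⟩
  rcases hij.lt_or_eq with hij | rfl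
  · intro x v
    simp [habove j hij, update_of_ne hij.ne]
  · refine hF.apply_update_eq_of_intPeriodic _ fun x z => ?_
    simp [apply_update_add_eq_add_mulVec e hρ hφ hp (hGmat i) habove, Matrix.mulVec_add,
      Matrix.map_intCast_mulVec]

/-- Let `Π` be a group with a chain of normal subgroups
`1 = Π_{n+1} ≤ Π_n ≤ ⋯ ≤ Π_1 ≤ Π` (here `P i` is `Π_{i+1}`, so `P (last n) = 1`), with
`Π/Π_1` of finite index and each `Π_i/Π_{i+1}` identified with `ℤ^{k_i}` via an isomorphism
`e i`; let `lam i` be the resulting conjugation action of `Π` by integral matrices.  Let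
`ρ : Π → P(ℝ^h)`, `h = k_1+⋯+k_n`, be a homomorphism into the polynomial diffeomorphisms of
`ℝ^h = ℝ^{k_1}×⋯×ℝ^{k_n}` of canonical type, i.e. satisfying conditions (1) and (2) below.
Let `φ : Π → Π` be an endomorphism preserving each `Π_i`, inducing the integral matrix
`Gmat i` on `Π_i/Π_{i+1} ≅ ℤ^{k_i}`.  If `p : ℝ^h → ℝ^h` is a polynomial map with
`p ∘ ρ(γ) = ρ(φ(γ)) ∘ p` for all `γ`, then for every `i` there is a polynomial map `pi`
depending only on the coordinates of index `< i` with
`p(x)_i = Gmat_i x_i + pi(x_1,…,x_{i−1})` for all `x`. -/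
theorem canonical_type_homotopy_lift_form {G : Type*} [Group G] {n : ℕ} (hn : 0 < n)
    (P : Fin (n + 1) → Subgroup G)
    [hPnorm : ∀ i, (P i).Normal]
    (hPlast : P (Fin.last n) = ⊥)
    (hPchain : ∀ i : Fin n, P i.succ ≤ P i.castSucc)
    [hPfin : (P 0).FiniteIndex]
    (k : Fin n → ℕ) (hk : ∀ i, 0 < k i)
    [hsub : ∀ i : Fin n, ((P i.succ).subgroupOf (P i.castSucc)).Normal]
    (e : (i : Fin n) →
      (↥(P i.castSucc) ⧸ (P i.succ).subgroupOf (P i.castSucc)) ≃*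
        Multiplicative (Fin (k i) → ℤ))
    -- the conjugation action `λ_i : Π → GL_{k_i}(ℤ)` on `Π_i/Π_{i+1} ≅ ℤ^{k_i}`
    (lam : (i : Fin n) → G → Matrix (Fin (k i)) (Fin (k i)) ℤ)
    (hlam_unit : ∀ i γ, IsUnit (lam i γ))
    (hlam : ∀ (i : Fin n) (γ : G) (x : P i.castSucc),
      Multiplicative.toAdd (e i (QuotientGroup.mk
        (⟨γ * (x : G) * γ⁻¹, (hPnorm i.castSucc).conj_mem _ x.2 γ⟩ : P i.castSucc))) =
        (lam i γ).mulVec (Multiplicative.toAdd (e i (QuotientGroup.mk x))))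
    -- `ρ` is a homomorphism of `Π` into the polynomial diffeomorphisms of `ℝ^h`
    (ρ : G → (((j : Fin n) → Fin (k j) → ℝ) → ((j : Fin n) → Fin (k j) → ℝ)))
    (hρ_one : ρ 1 = id)
    (hρ_mul : ∀ γ δ : G, ρ (γ * δ) = ρ γ ∘ ρ δ)
    (hρ_bij : ∀ γ : G, Function.Bijective (ρ γ))
    -- condition (1): canonical triangular polynomial form of each `ρ(γ)`
    (hρ1 : ∀ γ : G,
      ∃ q : (i : Fin n) → (((j : Fin n) → Fin (k j) → ℝ) → (Fin (k i) → ℝ)),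
        (∀ i, IsPolyMap (q i) ∧ DependsOnlyBelow i (q i)) ∧
        ∀ x i, ρ γ x i = ((lam i γ).map (Int.cast : ℤ → ℝ)).mulVec (x i) + q i x)
    -- condition (2): the special form of `ρ(γ)` for `γ ∈ Π_i` with `j_i(γΠ_{i+1}) = z`
    (hρ2 : ∀ (i : Fin n) (γ : G) (hγ : γ ∈ P i.castSucc),
      (∀ x j, j < i → ρ γ x j = x j) ∧
      (∀ x, ρ γ x i = x i + fun t =>
        ((Multiplicative.toAdd (e i (QuotientGroup.mk (⟨γ, hγ⟩ : P i.castSucc)))) t : ℝ)) ∧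
      ∃ q : (j : Fin n) → (((j' : Fin n) → Fin (k j') → ℝ) → (Fin (k j) → ℝ)),
        (∀ j, IsPolyMap (q j) ∧ DependsOnlyBelow j (q j)) ∧
        ∀ x j, i < j → ρ γ x j = ((lam j γ).map (Int.cast : ℤ → ℝ)).mulVec (x j) + q j x)
    -- the endomorphism `φ` with `φ(Π_i) ⊆ Π_i`, inducing `Gmat i` on `Π_i/Π_{i+1} ≅ ℤ^{k_i}`
    (φ : G →* G) (hφ : ∀ i : Fin n, ∀ γ ∈ P i.castSucc, φ γ ∈ P i.castSucc)
    (Gmat : (i : Fin n) → Matrix (Fin (k i)) (Fin (k i)) ℤ)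
    (hGmat : ∀ (i : Fin n) (x : P i.castSucc),
      Multiplicative.toAdd (e i (QuotientGroup.mk
        (⟨φ (x : G), hφ i (x : G) x.2⟩ : P i.castSucc))) =
        (Gmat i).mulVec (Multiplicative.toAdd (e i (QuotientGroup.mk x))))
    -- `p` is a polynomial map satisfying `p ∘ ρ(γ) = ρ(φ(γ)) ∘ p`
    (p : ((j : Fin n) → Fin (k j) → ℝ) → ((j : Fin n) → Fin (k j) → ℝ))
    (hp_poly : ∀ i : Fin n, IsPolyMap (fun x => p x i))
    (hp : ∀ γ : G, p ∘ ρ γ = ρ (φ γ) ∘ p) :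
    ∀ i : Fin n, ∃ pi : ((j : Fin n) → Fin (k j) → ℝ) → (Fin (k i) → ℝ),
      IsPolyMap pi ∧ DependsOnlyBelow i pi ∧
      ∀ x, p x i = ((Gmat i).map (Int.cast : ℤ → ℝ)).mulVec (x i) + pi x :=
  canonical_type_homotopy_lift_form_general P k (hsub := hsub) e lam ρ hρ2 φ hφ Gmat hGmat p hp_poly
    hp
end
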